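/- arXiv:1304.0196 — 19 statements merged into one kernel-verified Lean document; each statement's English description precedes it below -/
import Mathlib

section
/- Let (X, 𝓑) be a ball space and f : X → X a function such that: (C1) there is at least one f-contracting ball in 𝓑; (C2) for every f-contracting ball B ∈ 𝓑, the image f(B) contains an f-contracting ball; (C3) the intersection of every nest of f-contracting balls contains an f-contracting ball. Then f admits a fixed point. -/
/-- A subset `B` is `f`-contracting if it is a singleton containing a fixed point of `f`,
or `f(B) ⊊ B`. -/
def IsFContracting {X : Type*} (f : X → X) (B : Set X) : Prop :=
  (∃ x, B = {x} ∧ f x = x) ∨ f '' B ⊂ B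

theorem stmt_0 {X : Type*} [Nonempty X] (𝓑 : Set (Set X))
    (h𝓑ne : 𝓑.Nonempty) (h𝓑 : ∀ B ∈ 𝓑, B.Nonempty) (f : X → X)
    (hC1 : ∃ B ∈ 𝓑, IsFContracting f B)
    (hC2 : ∀ B ∈ 𝓑, IsFContracting f B → ∃ B' ∈ 𝓑, IsFContracting f B' ∧ B' ⊆ f '' B)
    (hC3 : ∀ 𝓝 ⊆ 𝓑, 𝓝.Nonempty → IsChain (· ⊆ ·) 𝓝 →
      (∀ B ∈ 𝓝, IsFContracting f B) → ∃ B' ∈ 𝓑, IsFContracting f B' ∧ B' ⊆ ⋂₀ 𝓝) :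
    ∃ x, f x = x := by
  set S : Set (Set X) := {B | B ∈ 𝓑 ∧ IsFContracting f B} with hS
  obtain ⟨B₀, hB₀, hB₀c⟩ := hC1
  obtain ⟨m, -, hmS, hmin⟩ := zorn_superset_nonempty S
    (fun c hcS hchain hcne => by
      obtain ⟨B', hB'𝓑, hB'c, hB'sub⟩ := hC3 c (fun B hB => (hcS hB).1) hcne hchain
        (fun B hB => (hcS hB).2)
      exact ⟨B', ⟨hB'𝓑, hB'c⟩, fun s hs => (hB'sub.trans (Set.sInter_subset_of_mem hs))⟩)
    B₀ ⟨hB₀, hB₀c⟩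
  rcases hmS.2 with ⟨x, -, hx⟩ | hss
  · exact ⟨x, hx⟩
  · obtain ⟨B', hB'𝓑, hB'c, hB'sub⟩ := hC2 m hmS.1 hmS.2
    have hBm : B' ⊆ m := hB'sub.trans hss.subset
    have : m ⊆ B' := hmin ⟨hB'𝓑, hB'c⟩ hBm
    exact absurd (this.trans hB'sub) hss.not_subset
end

section
/- Let (X, 𝓑) be a ball space and f : X → X a function such that: (CU1) X ∈ 𝓑 and X is an f-contracting ball; (CU2) for every f-contracting ball B ∈ 𝓑, the image f(B) is again an f-contracting ball (in particular f(B) ∈ 𝓑); (CU3) the intersection of every nest of f-contracting balls is again an f-contracting ball (in particular it lies in 𝓑). Then f has a unique fixed point. -/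
theorem stmt_1 {X : Type*} [Nonempty X] (𝓑 : Set (Set X))
    (h𝓑ne : 𝓑.Nonempty) (h𝓑 : ∀ B ∈ 𝓑, B.Nonempty) (f : X → X)
    (hCU1 : Set.univ ∈ 𝓑 ∧ IsFContracting f Set.univ)
    (hCU2 : ∀ B ∈ 𝓑, IsFContracting f B → f '' B ∈ 𝓑 ∧ IsFContracting f (f '' B))
    (hCU3 : ∀ 𝓝 ⊆ 𝓑, 𝓝.Nonempty → IsChain (· ⊆ ·) 𝓝 →
      (∀ B ∈ 𝓝, IsFContracting f B) → ⋂₀ 𝓝 ∈ 𝓑 ∧ IsFContracting f (⋂₀ 𝓝)) :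
    ∃! x, f x = x := by
  obtain ⟨hU𝓑, hUc⟩ := hCU1
  -- Existence
  have exist : ∃ x, f x = x := by
    obtain ⟨m, -, hm, hmin⟩ := zorn_superset_nonempty {B | B ∈ 𝓑 ∧ IsFContracting f B}
      (fun c hc hchain hne => by
        have h3 := hCU3 c (fun B hB => (hc hB).1) hne hchain (fun B hB => (hc hB).2)
        exact ⟨⋂₀ c, ⟨h3.1, h3.2⟩, fun s hs => Set.sInter_subset_of_mem hs⟩)
      Set.univ ⟨hU𝓑, hUc⟩
    rcases hm.2 with ⟨x, hx, hfx⟩ | hstrict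
    · exact ⟨x, hfx⟩
    · obtain ⟨hf𝓑, hfc⟩ := hCU2 m hm.1 hm.2
      exact absurd (hstrict.subset.antisymm (hmin ⟨hf𝓑, hfc⟩ hstrict.subset))
        hstrict.ne
  obtain ⟨x₀, hx₀⟩ := exist
  refine ⟨x₀, hx₀, fun y hy => ?_⟩
  obtain ⟨m, -, hm, hmin⟩ := zorn_superset_nonempty
    {B | B ∈ 𝓑 ∧ IsFContracting f B ∧ x₀ ∈ B ∧ y ∈ B}
    (fun c hc hchain hne => by
      have h3 := hCU3 c (fun B hB => (hc hB).1) hne hchain (fun B hB => (hc hB).2.1)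
      exact ⟨⋂₀ c, ⟨h3.1, h3.2, Set.mem_sInter.2 fun B hB => (hc hB).2.2.1,
        Set.mem_sInter.2 fun B hB => (hc hB).2.2.2⟩, fun s hs => Set.sInter_subset_of_mem hs⟩)
    Set.univ ⟨hU𝓑, hUc, trivial, trivial⟩
  obtain ⟨hm𝓑, hmc, hxm, hym⟩ := hm
  rcases hmc with ⟨z, hz, -⟩ | hstrict
  · rw [hz, Set.mem_singleton_iff] at hxm hym
    rw [hym, hxm]
  · obtain ⟨hf𝓑, hfc⟩ := hCU2 m hm𝓑 (Or.inr hstrict)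
    exact absurd (hstrict.subset.antisymm
      (hmin ⟨hf𝓑, hfc, ⟨x₀, hxm, hx₀⟩, ⟨y, hym, hy⟩⟩ hstrict.subset)) hstrict.ne
end

section
/- Let X be a compact topological space (not necessarily Hausdorff) and f : X → X a closed map. If every nonempty closed set B ⊆ X with f(B) ⊆ B contains a nonempty closed f-contracting subset, then f has a fixed point in X. If, moreover, every nonempty closed set B ⊆ X with f(B) ⊆ B is itself f-contracting, then f has a unique fixed point in X. -/
theorem stmt_2 {X : Type*} [TopologicalSpace X] [CompactSpace X] [Nonempty X]
    (f : X → X) (hf : IsClosedMap f) :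
    ((∀ B : Set X, B.Nonempty → IsClosed B → f '' B ⊆ B →
        ∃ C, C ⊆ B ∧ C.Nonempty ∧ IsClosed C ∧ IsFContracting f C) → ∃ x, f x = x) ∧
    ((∀ B : Set X, B.Nonempty → IsClosed B → f '' B ⊆ B → IsFContracting f B) →
      ∃! x, f x = x) := by
  have key : (∀ B : Set X, B.Nonempty → IsClosed B → f '' B ⊆ B →
        ∃ C, C ⊆ B ∧ C.Nonempty ∧ IsClosed C ∧ IsFContracting f C) → ∃ x, f x = x := by
    intro H
    -- Zorn: minimal nonempty closed invariant set
    set S : Set (Set X) := {B | B.Nonempty ∧ IsClosed B ∧ f '' B ⊆ B} with hS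
    obtain ⟨m, _, hm⟩ : ∃ m, m ⊆ Set.univ ∧ Minimal (· ∈ S) m := by
      apply zorn_superset_nonempty S ?_ Set.univ
        ⟨Set.univ_nonempty, isClosed_univ, Set.subset_univ _⟩
      intro c hcS hc hcne
      refine ⟨⋂₀ c, ⟨?_, ?_, ?_⟩, fun s hs => Set.sInter_subset_of_mem hs⟩
      · haveI : Nonempty c := hcne.to_subtype
        refine IsCompact.nonempty_sInter_of_directed_nonempty_isCompact_isClosed
          (fun a ha b hb => ?_) (fun U hU => (hcS hU).1)
          (fun U hU => (hcS hU).2.1.isCompact) (fun U hU => (hcS hU).2.1)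
        rcases eq_or_ne a b with rfl | hab
        · exact ⟨a, ha, subset_rfl, subset_rfl⟩
        · rcases hc ha hb hab with h | h
          · exact ⟨a, ha, subset_rfl, h⟩
          · exact ⟨b, hb, h, subset_rfl⟩
      · exact isClosed_sInter fun U hU => (hcS hU).2.1
      · intro y hy
        simp only [Set.mem_image] at hy
        obtain ⟨x, hx, rfl⟩ := hy
        exact Set.mem_sInter.2 fun U hU =>
          (hcS hU).2.2 ⟨x, Set.mem_sInter.1 hx U hU, rfl⟩
    obtain ⟨hmne, hmcl, hminv⟩ := hm.prop
    obtain ⟨C, hCm, hCne, hCcl, hCcon⟩ := H m hmne hmcl hminv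
    rcases hCcon with ⟨x, rfl, hx⟩ | hlt
    · exact ⟨x, hx⟩
    · exfalso
      have hfCm : f '' C ∈ S :=
        ⟨hCne.image f, hf C hCcl, Set.image_mono (f := f) (hlt.subset)⟩
      have : m ⊆ f '' C := hm.le_of_le hfCm ((Set.image_mono (f := f) hCm).trans hminv)
      exact hlt.not_subset (hCm.trans this)
  refine ⟨key, fun H => ?_⟩
  obtain ⟨x, hx⟩ := key fun B hBne hBcl hBinv => ⟨B, subset_rfl, hBne, hBcl, H B hBne hBcl hBinv⟩
  refine ⟨x, hx, fun y hy => ?_⟩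
  -- smallest closed invariant set containing x and y
  set S : Set (Set X) := {B | IsClosed B ∧ f '' B ⊆ B ∧ x ∈ B ∧ y ∈ B} with hS
  set B := ⋂₀ S with hB
  have hBS : B ∈ S := by
    refine ⟨isClosed_sInter fun U hU => hU.1, ?_, ?_, ?_⟩
    · rintro z ⟨w, hw, rfl⟩
      exact Set.mem_sInter.2 fun U hU => hU.2.1 ⟨w, Set.mem_sInter.1 hw U hU, rfl⟩
    · exact Set.mem_sInter.2 fun U hU => hU.2.2.1
    · exact Set.mem_sInter.2 fun U hU => hU.2.2.2
  obtain ⟨hBcl, hBinv, hxB, hyB⟩ := hBS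
  rcases H B ⟨x, hxB⟩ hBcl hBinv with ⟨z, hz, _⟩ | hlt
  · have h1 : x ∈ ({z} : Set X) := hz ▸ hxB
    have h2 : y ∈ ({z} : Set X) := hz ▸ hyB
    rw [Set.mem_singleton_iff] at h1 h2
    rw [h1, h2]
  · exfalso
    have hxf : x ∈ f '' B := ⟨x, hxB, hx⟩
    have hyf : y ∈ f '' B := ⟨y, hyB, hy⟩
    have hfBS : f '' B ∈ S :=
      ⟨hf B hBcl, Set.image_mono (f := f) hlt.subset, hxf, hyf⟩
    exact hlt.not_subset (Set.sInter_subset_of_mem hfBS)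
end

section
/- Let (X, 𝓑) be a ball space and f : X → X a function that is strongly contracting on orbits with respect to an assignment x ↦ B_x ∈ 𝓑. If for every f-nest 𝓝 in this ball space there is some z ∈ ⋂𝓝 such that B_z ⊆ ⋂𝓝, then f has a fixed point. -/
theorem stmt_3 {X : Type*} [Nonempty X] (𝓑 : Set (Set X))
    (h𝓑ne : 𝓑.Nonempty) (h𝓑 : ∀ B ∈ 𝓑, B.Nonempty)
    (f : X → X) (B : X → Set X) (hB : ∀ x, B x ∈ 𝓑)
    (hSC1 : ∀ x, x ∈ B x)
    (hSC2 : ∀ x, B (f x) ⊆ B x)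
    (hSC2' : ∀ x, x ≠ f x → ∃ i, 1 ≤ i ∧ B (f^[i] x) ⊂ B x)
    (hnest : ∀ S : Set X, S.Nonempty → (∀ x ∈ S, f x ∈ S) →
      IsChain (· ⊆ ·) (B '' S) → ∃ z ∈ ⋂ x ∈ S, B x, B z ⊆ ⋂ x ∈ S, B x) :
    ∃ x, f x = x := by
  -- monotonicity of B along orbits
  have hmono : ∀ x : X, ∀ m n : ℕ, m ≤ n → B (f^[n] x) ⊆ B (f^[m] x) := by
    intro x m n h
    induction n with
    | zero => simp [Nat.le_zero.mp h]
    | succ n ih =>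
      rcases Nat.lt_or_ge m (n + 1) with h' | h'
      · have h2 := ih (Nat.lt_succ_iff.mp h')
        rw [Function.iterate_succ_apply']
        exact (hSC2 _).trans h2
      · have : m = n + 1 := le_antisymm h h'
        subst this; rfl
  -- the collection of f-closed sets whose image under B is a nest
  set 𝒞 : Set (Set X) :=
    {S | S.Nonempty ∧ (∀ x ∈ S, f x ∈ S) ∧ IsChain (· ⊆ ·) (B '' S)} with h𝒞
  have orbit_mem : ∀ x : X, Set.range (fun n => f^[n] x) ∈ 𝒞 := by
    intro x
    refine ⟨⟨x, 0, rfl⟩, ?_, ?_⟩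
    · rintro y ⟨n, rfl⟩
      exact ⟨n + 1, Function.iterate_succ_apply' f n x⟩
    · rintro a ⟨y, ⟨m, rfl⟩, rfl⟩ b ⟨z, ⟨n, rfl⟩, rfl⟩ _
      rcases le_total m n with h | h
      · exact Or.inr (hmono x m n h)
      · exact Or.inl (hmono x n m h)
  obtain ⟨x0⟩ := ‹Nonempty X›
  obtain ⟨S, -, hSmax⟩ := zorn_subset_nonempty 𝒞
    (fun c hc hchain hcne => by
      obtain ⟨s0, hs0⟩ := hcne
      refine ⟨⋃₀ c, ⟨?_, ?_, ?_⟩, fun s hs => Set.subset_sUnion_of_mem hs⟩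
      · obtain ⟨y, hy⟩ := (hc hs0).1
        exact ⟨y, s0, hs0, hy⟩
      · rintro y ⟨s, hs, hys⟩
        exact ⟨s, hs, (hc hs).2.1 y hys⟩
      · rintro a ⟨y, ⟨s1, hs1, hy1⟩, rfl⟩ b ⟨z, ⟨s2, hs2, hz2⟩, rfl⟩ hne
        rcases eq_or_ne s1 s2 with rfl | hs12
        · exact (hc hs1).2.2 ⟨y, hy1, rfl⟩ ⟨z, hz2, rfl⟩ hne
        · rcases hchain hs1 hs2 hs12 with h | h
          · exact (hc hs2).2.2 ⟨y, h hy1, rfl⟩ ⟨z, hz2, rfl⟩ hne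
          · exact (hc hs1).2.2 ⟨y, hy1, rfl⟩ ⟨z, h hz2, rfl⟩ hne)
    _ (orbit_mem x0)
  obtain ⟨hSne, hSf, hSchain⟩ := hSmax.1
  obtain ⟨z, hz, hBz⟩ := hnest S hSne hSf hSchain
  refine ⟨z, ?_⟩
  by_contra hfz
  obtain ⟨i, hi1, hilt⟩ := hSC2' z (fun h => hfz h.symm)
  have hzi : ∀ x ∈ S, B z ⊆ B x := fun x hx =>
    hBz.trans (Set.biInter_subset_of_mem hx)
  -- extend S by the orbit of z
  set S' : Set X := S ∪ Set.range (fun n => f^[n] z) with hS'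
  have hS'mem : S' ∈ 𝒞 := by
    refine ⟨hSne.mono Set.subset_union_left, ?_, ?_⟩
    · rintro y (hy | ⟨n, rfl⟩)
      · exact Or.inl (hSf y hy)
      · exact Or.inr ⟨n + 1, Function.iterate_succ_apply' f n z⟩
    · rintro a ⟨y, hy, rfl⟩ b ⟨w, hw, rfl⟩ hne
      have orb_sub : ∀ n : ℕ, ∀ x ∈ S, B (f^[n] z) ⊆ B x := fun n x hx =>
        (hmono z 0 n (Nat.zero_le n)).trans (hzi x hx)
      rcases hy with hy | ⟨m, rfl⟩ <;> rcases hw with hw | ⟨n, rfl⟩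
      · exact hSchain ⟨y, hy, rfl⟩ ⟨w, hw, rfl⟩ hne
      · exact Or.inr (orb_sub n y hy)
      · exact Or.inl (orb_sub m w hw)
      · rcases le_total m n with h | h
        · exact Or.inr (hmono z m n h)
        · exact Or.inl (hmono z n m h)
  have hsub : S' ⊆ S := hSmax.2 hS'mem Set.subset_union_left
  have hmemi : f^[i] z ∈ S := hsub (Or.inr ⟨i, rfl⟩)
  exact hilt.2 (hzi _ hmemi)
end

section
/- Let (X₁, 𝓑₁) and (X₂, 𝓑₂) be ball spaces and f : X₁ → X₂ a function such that the preimage f⁻¹(B) of every ball B ∈ 𝓑₂ is a ball in 𝓑₁. Then: (1) if 𝓝 is a nest of balls in (X₂, 𝓑₂), then the collection of preimages {f⁻¹(B) : B ∈ 𝓝} is a nest of balls in (X₁, 𝓑₁); (2) if (X₁, 𝓑₁) is spherically complete, then so is (X₂, 𝓑₂). -/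
theorem stmt_4 {X₁ X₂ : Type*} [Nonempty X₁] [Nonempty X₂]
    (𝓑₁ : Set (Set X₁)) (𝓑₂ : Set (Set X₂))
    (h₁ne : 𝓑₁.Nonempty) (h₂ne : 𝓑₂.Nonempty)
    (hb₁ : ∀ B ∈ 𝓑₁, B.Nonempty) (hb₂ : ∀ B ∈ 𝓑₂, B.Nonempty)
    (f : X₁ → X₂) (hpre : ∀ B ∈ 𝓑₂, f ⁻¹' B ∈ 𝓑₁) :
    (∀ 𝓝 ⊆ 𝓑₂, 𝓝.Nonempty → IsChain (· ⊆ ·) 𝓝 →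
      (fun B => f ⁻¹' B) '' 𝓝 ⊆ 𝓑₁ ∧ ((fun B => f ⁻¹' B) '' 𝓝).Nonempty ∧
        IsChain (· ⊆ ·) ((fun B => f ⁻¹' B) '' 𝓝)) ∧
    ((∀ 𝓝 ⊆ 𝓑₁, 𝓝.Nonempty → IsChain (· ⊆ ·) 𝓝 → (⋂₀ 𝓝).Nonempty) →
      ∀ 𝓝 ⊆ 𝓑₂, 𝓝.Nonempty → IsChain (· ⊆ ·) 𝓝 → (⋂₀ 𝓝).Nonempty) := by
  have key : ∀ 𝓝 ⊆ 𝓑₂, 𝓝.Nonempty → IsChain (· ⊆ ·) 𝓝 →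
      (fun B => f ⁻¹' B) '' 𝓝 ⊆ 𝓑₁ ∧ ((fun B => f ⁻¹' B) '' 𝓝).Nonempty ∧
        IsChain (· ⊆ ·) ((fun B => f ⁻¹' B) '' 𝓝) := by
    intro 𝓝 hsub hne hchain
    refine ⟨?_, hne.image _, ?_⟩
    · rintro _ ⟨B, hB, rfl⟩
      exact hpre B (hsub hB)
    · rintro _ ⟨A, hA, rfl⟩ _ ⟨B, hB, rfl⟩ hne'
      rcases eq_or_ne A B with rfl | hAB
      · exact absurd rfl hne'
      · rcases hchain hA hB hAB with h | h
        · exact Or.inl (Set.preimage_mono h)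
        · exact Or.inr (Set.preimage_mono h)
  refine ⟨key, ?_⟩
  intro hsc 𝓝 hsub hne hchain
  obtain ⟨h1, h2, h3⟩ := key 𝓝 hsub hne hchain
  obtain ⟨x, hx⟩ := hsc _ h1 h2 h3
  refine ⟨f x, ?_⟩
  intro B hB
  exact hx _ ⟨B, hB, rfl⟩
end

section
/- Every self-contractive function f : X → X on a spherically complete ball space (X, 𝓑) has a fixed point. -/
theorem stmt_5 {X : Type*} [Nonempty X] (𝓑 : Set (Set X))
    (h𝓑ne : 𝓑.Nonempty) (h𝓑 : ∀ B ∈ 𝓑, B.Nonempty)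
    (f : X → X) (B : X → Set X) (hB : ∀ x, B x ∈ 𝓑)
    (hSC1 : ∀ x, x ∈ B x)
    (hSC2 : ∀ x, B (f x) ⊆ B x)
    (hSC2' : ∀ x, x ≠ f x → ∃ i, 1 ≤ i ∧ B (f^[i] x) ⊂ B x)
    (hSC3 : ∀ S : Set X, S.Nonempty → (∀ x ∈ S, f x ∈ S) →
      IsChain (· ⊆ ·) (B '' S) → ∀ z ∈ ⋂ x ∈ S, B x, B z ⊆ ⋂ x ∈ S, B x)
    (hsph : ∀ 𝓝 ⊆ 𝓑, 𝓝.Nonempty → IsChain (· ⊆ ·) 𝓝 → (⋂₀ 𝓝).Nonempty) :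
    ∃ x, f x = x := by
  classical
  obtain ⟨x₀⟩ := ‹Nonempty X›
  -- monotonicity along orbits
  have hmono : ∀ k x, B (f^[k] x) ⊆ B x := by
    intro k
    induction k with
    | zero => intro x; simp
    | succ k ih =>
      intro x
      rw [Function.iterate_succ_apply]
      exact (ih (f x)).trans (hSC2 x)
  have hmono2 : ∀ x m n, m ≤ n → B (f^[n] x) ⊆ B (f^[m] x) := by
    intro x m n hmn
    have := hmono (n - m) (f^[m] x)
    rwa [← Function.iterate_add_apply, Nat.sub_add_cancel hmn] at this
  set 𝒜 : Set (Set X) :=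
    {S | S.Nonempty ∧ (∀ x ∈ S, f x ∈ S) ∧ IsChain (· ⊆ ·) (B '' S)} with h𝒜
  have horb : ∀ z : X, (Set.range fun n => f^[n] z) ∈ 𝒜 := by
    intro z
    refine ⟨⟨z, 0, rfl⟩, ?_, ?_⟩
    · rintro x ⟨n, rfl⟩
      exact ⟨n + 1, Function.iterate_succ_apply' f n z⟩
    · rintro _ ⟨_, ⟨m, rfl⟩, rfl⟩ _ ⟨_, ⟨n, rfl⟩, rfl⟩ _
      rcases le_total m n with h | h
      · exact Or.inr (hmono2 z m n h)
      · exact Or.inl (hmono2 z n m h)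
  have hub : ∀ c ⊆ 𝒜, IsChain (· ⊆ ·) c → c.Nonempty → ∃ ub ∈ 𝒜, ∀ s ∈ c, s ⊆ ub := by
    intro c hc hchain hcne
    refine ⟨⋃₀ c, ⟨?_, ?_, ?_⟩, fun s hs => Set.subset_sUnion_of_mem hs⟩
    · obtain ⟨s, hs⟩ := hcne
      obtain ⟨x, hx⟩ := (hc hs).1
      exact ⟨x, s, hs, hx⟩
    · rintro x ⟨s, hs, hx⟩
      exact ⟨s, hs, (hc hs).2.1 x hx⟩
    · rintro _ ⟨x, ⟨s, hs, hx⟩, rfl⟩ _ ⟨y, ⟨t, ht, hy⟩, rfl⟩ hne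
      rcases hchain.total hs ht with h | h
      · exact (hc ht).2.2 ⟨x, h hx, rfl⟩ ⟨y, hy, rfl⟩ hne
      · exact (hc hs).2.2 ⟨x, hx, rfl⟩ ⟨y, h hy, rfl⟩ hne
  obtain ⟨S₀, -, hS₀, hmax⟩ := zorn_subset_nonempty 𝒜 hub _ (horb x₀)
  obtain ⟨hne, hcl, hch⟩ := hS₀
  -- spherical completeness gives a point in the intersection
  have hchain' : IsChain (· ⊆ ·) (B '' S₀) := hch
  obtain ⟨z, hz⟩ := hsph (B '' S₀) (by rintro _ ⟨x, -, rfl⟩; exact hB x)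
    (hne.image B) hchain'
  rw [Set.sInter_image] at hz
  have hBz : B z ⊆ ⋂ x ∈ S₀, B x := hSC3 S₀ hne hcl hchain' z hz
  -- extend S₀ by the orbit of z; maximality forces it inside S₀
  have hext : S₀ ∪ Set.range (fun n => f^[n] z) ∈ 𝒜 := by
    obtain ⟨hne', hcl', hch'⟩ := horb z
    refine ⟨hne.mono Set.subset_union_left, ?_, ?_⟩
    · rintro x (hx | hx)
      · exact Or.inl (hcl x hx)
      · exact Or.inr (hcl' x hx)
    · rw [Set.image_union]
      intro A hA C hC hAC
      have key : ∀ A ∈ B '' Set.range (fun n => f^[n] z), ∀ C ∈ B '' S₀, A ⊆ C := by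
        rintro _ ⟨_, ⟨n, rfl⟩, rfl⟩ _ ⟨x, hx, rfl⟩
        exact (hmono n z).trans (hBz.trans (Set.biInter_subset_of_mem hx))
      rcases hA with hA | hA <;> rcases hC with hC | hC
      · exact hch hA hC hAC
      · exact Or.inr (key C hC A hA)
      · exact Or.inl (key A hA C hC)
      · exact hch' hA hC hAC
  have hsub : S₀ ∪ Set.range (fun n => f^[n] z) ⊆ S₀ :=
    hmax hext Set.subset_union_left
  have hzS : ∀ n, f^[n] z ∈ S₀ := fun n => hsub (Or.inr ⟨n, rfl⟩)
  -- z is a fixed point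
  by_contra hfix
  push_neg at hfix
  have hzne : z ≠ f z := fun h => hfix z h.symm
  obtain ⟨i, hi, hss⟩ := hSC2' z hzne
  exact hss.not_subset (hBz.trans (Set.biInter_subset_of_mem (hzS i)))
end

section
/- Let (X, 𝓑) and (X', 𝓑') be ball spaces, φ : X → X' a function, and z' ∈ X' an attractor for φ, i.e., there are a self-contractive function f : X → X (with assignment x ↦ B_x ∈ 𝓑) and an assignment X ∋ x ↦ B'_x ∈ 𝓑' such that for all x ∈ X: (AT1) z' ∈ B'_x and φ(B_x) ⊆ B'_x; (AT2) if φ(x) ≠ z', then B'_{f^i x} ⊊ B'_x for some i ≥ 1. If (X, 𝓑) is spherically complete, then z' ∈ φ(X). -/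
theorem stmt_6 {X X' : Type*} [Nonempty X] (𝓑 : Set (Set X)) (𝓑' : Set (Set X'))
    (h𝓑ne : 𝓑.Nonempty) (h𝓑 : ∀ B ∈ 𝓑, B.Nonempty)
    (h𝓑'ne : 𝓑'.Nonempty) (h𝓑' : ∀ B ∈ 𝓑', B.Nonempty)
    (φ : X → X') (z' : X')
    (f : X → X) (B : X → Set X) (hB : ∀ x, B x ∈ 𝓑)
    (hSC1 : ∀ x, x ∈ B x)
    (hSC2 : ∀ x, B (f x) ⊆ B x)
    (hSC2' : ∀ x, x ≠ f x → ∃ i, 1 ≤ i ∧ B (f^[i] x) ⊂ B x)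
    (hSC3 : ∀ S : Set X, S.Nonempty → (∀ x ∈ S, f x ∈ S) →
      IsChain (· ⊆ ·) (B '' S) → ∀ z ∈ ⋂ x ∈ S, B x, B z ⊆ ⋂ x ∈ S, B x)
    (B' : X → Set X') (hB' : ∀ x, B' x ∈ 𝓑')
    (hAT1 : ∀ x, z' ∈ B' x ∧ φ '' B x ⊆ B' x)
    (hAT2 : ∀ x, φ x ≠ z' → ∃ i, 1 ≤ i ∧ B' (f^[i] x) ⊂ B' x)
    (hsph : ∀ 𝓝 ⊆ 𝓑, 𝓝.Nonempty → IsChain (· ⊆ ·) 𝓝 → (⋂₀ 𝓝).Nonempty) :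
    z' ∈ Set.range φ := by
  -- monotonicity of balls along orbits
  have hmono : ∀ (x : X) (n m : ℕ), n ≤ m → B (f^[m] x) ⊆ B (f^[n] x) := by
    intro x n m h
    induction m, h using Nat.le_induction with
    | base => exact subset_rfl
    | succ m hm ih =>
      rw [Function.iterate_succ_apply']
      exact (hSC2 _).trans ih
  -- the collection of "good" sets
  set 𝒞 : Set (Set X) :=
    {S | S.Nonempty ∧ (∀ x ∈ S, f x ∈ S) ∧ IsChain (· ⊆ ·) (B '' S)} with h𝒞
  obtain ⟨x0⟩ := ‹Nonempty X›
  have hS0 : Set.range (fun n => f^[n] x0) ∈ 𝒞 := by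
    refine ⟨⟨x0, 0, rfl⟩, ?_, ?_⟩
    · rintro x ⟨n, rfl⟩
      exact ⟨n + 1, Function.iterate_succ_apply' f n x0⟩
    · rintro s ⟨a, ⟨n, rfl⟩, rfl⟩ t ⟨b, ⟨m, rfl⟩, rfl⟩ _
      rcases le_total n m with h | h
      · exact Or.inr (hmono x0 n m h)
      · exact Or.inl (hmono x0 m n h)
  obtain ⟨S, hSsub, hSmax⟩ := zorn_subset_nonempty 𝒞 (fun c hc hchain hcne => by
      refine ⟨⋃₀ c, ⟨?_, ?_, ?_⟩, fun s hs => Set.subset_sUnion_of_mem hs⟩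
      · obtain ⟨s, hs⟩ := hcne
        obtain ⟨x, hx⟩ := (hc hs).1
        exact ⟨x, s, hs, hx⟩
      · rintro x ⟨s, hs, hxs⟩
        exact ⟨s, hs, (hc hs).2.1 x hxs⟩
      · rintro u ⟨a, ⟨s, hs, has⟩, rfl⟩ v ⟨b, ⟨t, ht, hbt⟩, rfl⟩ huv
        rcases hchain.total hs ht with h | h
        · exact (hc ht).2.2 ⟨a, h has, rfl⟩ ⟨b, hbt, rfl⟩ huv
        · exact (hc hs).2.2 ⟨a, has, rfl⟩ ⟨b, h hbt, rfl⟩ huv)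
    _ hS0
  obtain ⟨hSne, hSclosed, hSchain⟩ := hSmax.prop
  -- spherical completeness gives z in the intersection of the nest
  have hnest : (⋂₀ (B '' S)).Nonempty := by
    refine hsph _ ?_ (hSne.image B) hSchain
    rintro s ⟨x, _, rfl⟩; exact hB x
  obtain ⟨z, hz⟩ := hnest
  have hzI : z ∈ ⋂ x ∈ S, B x := by
    rw [Set.sInter_image] at hz; exact hz
  have hBz : B z ⊆ ⋂ x ∈ S, B x := hSC3 S hSne hSclosed hSchain z hzI
  have hzBall : ∀ x ∈ S, z ∈ B x := fun x hx => Set.mem_iInter₂.mp hzI x hx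
  -- z is a fixed point of f
  have hfz : f z = z := by
    by_contra hne
    obtain ⟨i, hi1, hilt⟩ := hSC2' z (fun h => hne h.symm)
    -- enlarge S by the orbit of z
    set S' : Set X := S ∪ Set.range (fun n => f^[n] z) with hS'
    have hzsub : ∀ n, B (f^[n] z) ⊆ ⋂ x ∈ S, B x :=
      fun n => (hmono z 0 n (Nat.zero_le n)).trans hBz
    have hS'mem : S' ∈ 𝒞 := by
      refine ⟨hSne.mono Set.subset_union_left, ?_, ?_⟩
      · rintro x (hx | ⟨n, rfl⟩)
        · exact Or.inl (hSclosed x hx)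
        · exact Or.inr ⟨n + 1, Function.iterate_succ_apply' f n z⟩
      · rintro u ⟨a, (ha | ⟨n, rfl⟩), rfl⟩ v ⟨b, (hb | ⟨m, rfl⟩), rfl⟩ huv
        · exact hSchain ⟨a, ha, rfl⟩ ⟨b, hb, rfl⟩ huv
        · exact Or.inr ((hzsub m).trans (Set.biInter_subset_of_mem ha))
        · exact Or.inl ((hzsub n).trans (Set.biInter_subset_of_mem hb))
        · rcases le_total n m with h | h
          · exact Or.inr (hmono z n m h)
          · exact Or.inl (hmono z m n h)
    have hS'eq : f^[i] z ∈ S :=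
      hSmax.eq_of_subset hS'mem Set.subset_union_left ▸ Or.inr ⟨i, rfl⟩
    have h1 : B z ⊆ B (f^[i] z) := hBz.trans (Set.biInter_subset_of_mem hS'eq)
    exact hilt.not_subset h1
  -- conclude: φ z = z'
  have hiter : ∀ i, f^[i] z = z := fun i => Function.iterate_fixed hfz i
  by_contra hzne
  have hφz : φ z ≠ z' := fun h => hzne ⟨z, h⟩
  obtain ⟨i, _, hlt⟩ := hAT2 z hφz
  rw [hiter i] at hlt
  exact hlt.ne rfl
end

section
/- Let (X, 𝓑) and (X', 𝓑') be ball spaces, φ : X → X' a function, and z' ∈ X' a weak f-attractor for φ, i.e., there are a function f : X → X that is strongly contracting on orbits (with assignment x ↦ B_x ∈ 𝓑) and an assignment X ∋ x ↦ B'_x ∈ 𝓑' such that for all x ∈ X: (AT1) z' ∈ B'_x and φ(B_x) ⊆ B'_x; (AT2) if φ(x) ≠ z', then B'_{f^i x} ⊊ B'_x for some i ≥ 1. If for every f-nest 𝓝 in (X, 𝓑) there is some z ∈ ⋂𝓝 such that B_z ⊆ ⋂𝓝, then z' ∈ φ(X). -/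
theorem stmt_7 {X X' : Type*} [Nonempty X] (𝓑 : Set (Set X)) (𝓑' : Set (Set X'))
    (h𝓑ne : 𝓑.Nonempty) (h𝓑 : ∀ B ∈ 𝓑, B.Nonempty)
    (h𝓑'ne : 𝓑'.Nonempty) (h𝓑' : ∀ B ∈ 𝓑', B.Nonempty)
    (φ : X → X') (z' : X')
    (f : X → X) (B : X → Set X) (hB : ∀ x, B x ∈ 𝓑)
    (hSC1 : ∀ x, x ∈ B x)
    (hSC2 : ∀ x, B (f x) ⊆ B x)
    (hSC2' : ∀ x, x ≠ f x → ∃ i, 1 ≤ i ∧ B (f^[i] x) ⊂ B x)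
    (B' : X → Set X') (hB' : ∀ x, B' x ∈ 𝓑')
    (hAT1 : ∀ x, z' ∈ B' x ∧ φ '' B x ⊆ B' x)
    (hAT2 : ∀ x, φ x ≠ z' → ∃ i, 1 ≤ i ∧ B' (f^[i] x) ⊂ B' x)
    (hnest : ∀ S : Set X, S.Nonempty → (∀ x ∈ S, f x ∈ S) →
      IsChain (· ⊆ ·) (B '' S) → ∃ z ∈ ⋂ x ∈ S, B x, B z ⊆ ⋂ x ∈ S, B x) :
    z' ∈ Set.range φ := by
  classical
  -- monotonicity along orbits
  have mono : ∀ (x : X) (n : ℕ), B (f^[n] x) ⊆ B x := by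
    intro x n
    induction n with
    | zero => simp
    | succ n ih =>
      rw [Function.iterate_succ_apply']
      exact (hSC2 (f^[n] x)).trans ih
  have mono' : ∀ (x : X) (m n : ℕ), m ≤ n → B (f^[n] x) ⊆ B (f^[m] x) := by
    intro x m n hmn
    obtain ⟨k, rfl⟩ := Nat.exists_eq_add_of_le hmn
    rw [Nat.add_comm, Function.iterate_add_apply]
    exact mono _ _
  -- collection of f-nests
  set coll : Set (Set X) :=
    {S | S.Nonempty ∧ (∀ x ∈ S, f x ∈ S) ∧ IsChain (· ⊆ ·) (B '' S)} with hcoll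
  obtain ⟨x₀⟩ := ‹Nonempty X›
  have horb : Set.range (fun n => f^[n] x₀) ∈ coll := by
    refine ⟨⟨x₀, 0, rfl⟩, ?_, ?_⟩
    · rintro x ⟨n, rfl⟩
      exact ⟨n + 1, by simp [Function.iterate_succ_apply']⟩
    · rintro _ ⟨_, ⟨m, rfl⟩, rfl⟩ _ ⟨_, ⟨n, rfl⟩, rfl⟩ _
      dsimp only
      rcases le_total m n with h | h
      · exact Or.inr (mono' x₀ m n h)
      · exact Or.inl (mono' x₀ n m h)
  -- Zorn: maximal f-nest
  obtain ⟨S, hSmax⟩ := zorn_subset_nonempty coll (fun c hc hchain hcne => by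
      refine ⟨⋃₀ c, ⟨?_, ?_, ?_⟩, fun s hs => Set.subset_sUnion_of_mem hs⟩
      · obtain ⟨s, hs⟩ := hcne
        obtain ⟨x, hx⟩ := (hc hs).1
        exact ⟨x, s, hs, hx⟩
      · rintro x ⟨s, hs, hxs⟩
        exact ⟨s, hs, (hc hs).2.1 x hxs⟩
      · rintro _ ⟨a, ⟨s, hs, has⟩, rfl⟩ _ ⟨b, ⟨t, ht, hbt⟩, rfl⟩ hne
        rcases hchain.total hs ht with h | h
        · exact (hc ht).2.2 ⟨a, h has, rfl⟩ ⟨b, hbt, rfl⟩ hne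
        · exact (hc hs).2.2 ⟨a, has, rfl⟩ ⟨b, h hbt, rfl⟩ hne)
    _ horb
  obtain ⟨hSorb, hScoll, hSmax'⟩ :
      Set.range (fun n => f^[n] x₀) ⊆ S ∧ S ∈ coll ∧ ∀ T ∈ coll, S ⊆ T → T ⊆ S := by
    rcases hSmax with ⟨h1, h2, h3⟩
    exact ⟨h1, h2, fun T hT hST => h3 hT hST⟩
  obtain ⟨hSne, hSf, hSchain⟩ := hScoll
  obtain ⟨z, hz, hBz⟩ := hnest S hSne hSf hSchain
  have hBz' : ∀ x ∈ S, B z ⊆ B x := by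
    intro x hx
    exact hBz.trans (Set.biInter_subset_of_mem hx)
  -- extend S by the orbit of z
  have hT : S ∪ Set.range (fun n => f^[n] z) ∈ coll := by
    refine ⟨hSne.mono Set.subset_union_left, ?_, ?_⟩
    · rintro x (hx | ⟨n, rfl⟩)
      · exact Or.inl (hSf x hx)
      · exact Or.inr ⟨n + 1, by simp [Function.iterate_succ_apply']⟩
    · have key : ∀ (n : ℕ) (x), x ∈ S → B (f^[n] z) ⊆ B x := by
        intro n x hx
        exact ((mono z n).trans (hBz' x hx))
      rintro _ ⟨a, (ha | ⟨m, rfl⟩), rfl⟩ _ ⟨b, (hb | ⟨n, rfl⟩), rfl⟩ hne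
      · exact hSchain ⟨a, ha, rfl⟩ ⟨b, hb, rfl⟩ hne
      · exact Or.inr (key n a ha)
      · exact Or.inl (key m b hb)
      · rcases le_total m n with h | h
        · exact Or.inr (mono' z m n h)
        · exact Or.inl (mono' z n m h)
  have hzS : z ∈ S := hSmax' _ hT Set.subset_union_left (Or.inr ⟨0, rfl⟩)
  -- z is a fixed point of f
  have hfz : f z = z := by
    by_contra hne
    obtain ⟨i, _, hilt⟩ := hSC2' z (fun h => hne h.symm)
    have hiS : ∀ n : ℕ, f^[n] z ∈ S := by
      intro n
      induction n with
      | zero => exact hzS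
      | succ n ih =>
        rw [Function.iterate_succ_apply']
        exact hSf _ ih
    exact hilt.2 (hBz' _ (hiS i))
  have hφz : φ z = z' := by
    by_contra hne
    obtain ⟨i, _, hilt⟩ := hAT2 z hne
    rw [Function.iterate_fixed hfz] at hilt
    exact hilt.2 le_rfl
  exact ⟨z, hφz⟩
end

section
/- Let X be a connected compact Hausdorff topological space and f : X → X a continuous J-contraction. Then f has a unique fixed point. -/
/-- An open cover `𝓥` is `J`-contractive for `f` if for every `V ∈ 𝓥` there is `V' ∈ 𝓥`
with `f(cl V) ⊆ V'`. -/
def IsJContractiveCover {X : Type*} [TopologicalSpace X] (f : X → X) (𝓥 : Set (Set X)) : Prop :=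
  ∀ V ∈ 𝓥, ∃ V' ∈ 𝓥, f '' closure V ⊆ V'

/-- `f` is a `J`-contraction if every open cover of `X` has a finite open refinement that is
`J`-contractive for `f`. -/
def IsJContraction {X : Type*} [TopologicalSpace X] (f : X → X) : Prop :=
  ∀ 𝓤 : Set (Set X), (∀ U ∈ 𝓤, IsOpen U) → ⋃₀ 𝓤 = Set.univ →
    ∃ 𝓥 : Set (Set X), 𝓥.Finite ∧ (∀ V ∈ 𝓥, IsOpen V) ∧ ⋃₀ 𝓥 = Set.univ ∧
      (∀ V ∈ 𝓥, ∃ U ∈ 𝓤, V ⊆ U) ∧ IsJContractiveCover f 𝓥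

open Filter Set Function Topology

attribute [local instance] Ultrafilter.add Ultrafilter.addSemigroup

section Aux

variable {X : Type*} [TopologicalSpace X]

/-- Iterating the `J`-contractive choice function: `f^[m](cl V) ⊆ φ^[m] V` for `m ≥ 1`. -/
private lemma iterPhi (f : X → X) {𝓥 : Set (Set X)} {φ : Set X → Set X}
    (hφ : ∀ V, V ∈ 𝓥 → φ V ∈ 𝓥 ∧ f '' closure V ⊆ φ V) :
    ∀ m : ℕ, 1 ≤ m → ∀ V, V ∈ 𝓥 → φ^[m] V ∈ 𝓥 ∧ f^[m] '' closure V ⊆ φ^[m] V := by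
  intro m hm
  induction m, hm using Nat.le_induction with
  | base =>
    intro V hV
    simpa using hφ V hV
  | succ m hm ih =>
    intro V hV
    obtain ⟨h1, h2⟩ := ih V hV
    obtain ⟨h3, h4⟩ := hφ _ h1
    constructor
    · rw [Function.iterate_succ_apply']
      exact h3
    · rw [Function.iterate_succ_apply']
      rw [Function.iterate_succ']
      rw [Set.image_comp]
      refine subset_trans (Set.image_mono ?_) h4
      exact h2.trans subset_closure

/-- There is an idempotent ultrafilter on `ℕ` containing all tails. -/
private lemma goodUltra : ∃ 𝒰 : Ultrafilter ℕ, 𝒰 + 𝒰 = 𝒰 ∧ ∀ n : ℕ, {k : ℕ | n ≤ k} ∈ 𝒰 := by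
  obtain ⟨𝒰, hidem, hFS⟩ :=
    Hindman.exists_idempotent_ultrafilter_le_FS (Stream'.const (1 : ℕ))
  refine ⟨𝒰, hidem, ?_⟩
  have hpos : {k : ℕ | 1 ≤ k} ∈ 𝒰 := by
    have hmono : ∀ m : ℕ, m ∈ Hindman.FS (Stream'.const (1 : ℕ)) → 1 ≤ m := by
      have H : ∀ (a : Stream' ℕ) (m : ℕ), m ∈ Hindman.FS a →
          a = Stream'.const (1 : ℕ) → 1 ≤ m := by
        intro a m hm
        induction hm with
        | head' a => intro ha; rw [ha]; exact Nat.le.refl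
        | tail' a m h ih =>
          intro ha
          exact ih (by rw [ha]; exact Stream'.tail_const 1)
        | cons' a m h ih =>
          intro ha
          have h1 : 1 ≤ a.head := by rw [ha]; exact Nat.le.refl
          omega
      intro m hm
      exact H _ m hm rfl
    exact Filter.mem_of_superset hFS hmono
  have key : ∀ m : ℕ, {k : ℕ | k ≤ m} ∉ 𝒰 := by
    intro m
    induction m with
    | zero =>
      intro h
      obtain ⟨k, hk1, hk2⟩ := Ultrafilter.nonempty_of_mem (Filter.inter_mem h hpos)
      simp only [Set.mem_setOf_eq] at hk1 hk2
      omega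
    | succ m ih =>
      intro h
      apply ih
      have h2 : ∀ᶠ j in (𝒰 : Filter ℕ), ∀ᶠ k in (𝒰 : Filter ℕ), j + k ≤ m + 1 := by
        have : (∀ᶠ x in ((𝒰 + 𝒰 : Ultrafilter ℕ) : Filter ℕ), x ≤ m + 1) := by
          rw [hidem]; exact h
        exact (Ultrafilter.eventually_add 𝒰 𝒰 _).mp this
      obtain ⟨j, hj1, hj2⟩ :=
        Ultrafilter.nonempty_of_mem (Filter.inter_mem hpos h2)
      refine Filter.mem_of_superset hj2 ?_
      intro k hk
      simp only [Set.mem_setOf_eq] at *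
      omega
  intro n
  by_contra hn
  have : {k : ℕ | n ≤ k}ᶜ ∈ 𝒰 := Ultrafilter.compl_mem_iff_notMem.mpr hn
  exact key n (Filter.mem_of_superset this (by intro k hk; simp at hk ⊢; omega))

end Aux

section Rec

variable {X : Type*} [TopologicalSpace X] [CompactSpace X] [T2Space X]

/-- Recurrence: if the iterates of `g` are "equicontinuous" in the cover sense, `A` is closed
and fully invariant under all iterates of `g`, then every point of `A` returns to each of its
neighbourhoods at arbitrarily late times. -/
private lemma recurrence {g : X → X} (hg : Continuous g) {A : Set X}
    (hA : IsClosed A) (hsurj : ∀ k : ℕ, g^[k] '' A = A)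
    (heq : ∀ z : X, ∀ P Q : Set X, IsClosed P → IsClosed Q → P ∩ Q = ∅ →
      ∃ V : Set X, IsOpen V ∧ z ∈ V ∧ ∀ k : ℕ, g^[k] '' V ⊆ Pᶜ ∨ g^[k] '' V ⊆ Qᶜ)
    {x : X} (hx : x ∈ A) {N : Set X} (hN : IsOpen N) (hxN : x ∈ N) (n : ℕ) :
    ∃ k : ℕ, n ≤ k ∧ g^[k] x ∈ N := by
  obtain ⟨𝒰, hidem, htails⟩ := goodUltra
  have hAcpt : IsCompact A := hA.isCompact
  have hgk : ∀ y, y ∈ A → ∀ k : ℕ, g^[k] y ∈ A := by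
    intro y hy k
    rw [← hsurj k]
    exact Set.mem_image_of_mem _ hy
  -- the ultrafilter-limit function
  have hL : ∀ y : X, ∃ w : X,
      y ∈ A → w ∈ A ∧ Filter.Tendsto (fun k => g^[k] y) (𝒰 : Filter ℕ) (nhds w) := by
    intro y
    by_cases hy : y ∈ A
    · have hmem : A ∈ 𝒰.map (fun k => g^[k] y) := by
        rw [Ultrafilter.mem_map]
        exact Filter.mem_of_superset Filter.univ_mem (fun k _ => hgk y hy k)
      obtain ⟨w, hwA, hw⟩ := hAcpt.ultrafilter_le_nhds' (𝒰.map fun k => g^[k] y) hmem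
      refine ⟨w, fun _ => ⟨hwA, ?_⟩⟩
      rwa [Ultrafilter.coe_map] at hw
    · exact ⟨y, fun h => absurd h hy⟩
  choose ℓ hℓ using hL
  -- idempotency of the limit operator
  have hidem2 : ∀ y, y ∈ A → ℓ (ℓ y) = ℓ y := by
    intro y hy
    obtain ⟨hyA', hyT⟩ := hℓ y hy
    obtain ⟨hwA, hwT⟩ := hℓ (ℓ y) hyA'
    refine tendsto_nhds_unique ?_ hyT
    rw [(nhds_basis_opens (ℓ (ℓ y))).tendsto_right_iff]
    rintro s ⟨hs_mem, hs_open⟩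
    have h1 : ∀ᶠ j in (𝒰 : Filter ℕ), g^[j] (ℓ y) ∈ s :=
      hwT.eventually_mem (hs_open.mem_nhds hs_mem)
    have h2 : ∀ᶠ j in (𝒰 : Filter ℕ), ∀ᶠ k in (𝒰 : Filter ℕ), g^[j + k] y ∈ s := by
      filter_upwards [h1] with j hj
      have hcont : Filter.Tendsto (fun k => g^[j] (g^[k] y)) (𝒰 : Filter ℕ)
          (nhds (g^[j] (ℓ y))) := ((hg.iterate j).tendsto _).comp hyT
      have := hcont.eventually_mem (hs_open.mem_nhds hj)
      simpa [Function.iterate_add_apply] using this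
    have h3 : ∀ᶠ m in ((𝒰 + 𝒰 : Ultrafilter ℕ) : Filter ℕ), g^[m] y ∈ s :=
      (Ultrafilter.eventually_add 𝒰 𝒰 _).mpr h2
    rw [hidem] at h3
    exact h3
  -- surjectivity of the limit operator on A
  have hsur : ∀ a, a ∈ A → ∃ z, z ∈ A ∧ ℓ z = a := by
    intro a ha
    have hpre : ∀ k : ℕ, ∃ z, z ∈ A ∧ g^[k] z = a := by
      intro k
      have : a ∈ g^[k] '' A := by rw [hsurj k]; exact ha
      obtain ⟨z, hz1, hz2⟩ := this
      exact ⟨z, hz1, hz2⟩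
    choose zf hz1 hz2 using hpre
    have hmem : A ∈ 𝒰.map zf := by
      rw [Ultrafilter.mem_map]
      exact Filter.mem_of_superset Filter.univ_mem (fun k _ => hz1 k)
    obtain ⟨z, hzA, hzT0⟩ := hAcpt.ultrafilter_le_nhds' (𝒰.map zf) hmem
    rw [Ultrafilter.coe_map] at hzT0
    have hzT : Filter.Tendsto zf (𝒰 : Filter ℕ) (nhds z) := hzT0
    refine ⟨z, hzA, ?_⟩
    by_contra hne
    obtain ⟨hlzA, hlzT⟩ := hℓ z hzA
    obtain ⟨U, V', hU, hV', haU, hlV', hUV⟩ := t2_separation (Ne.symm hne)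
    obtain ⟨P, hPn, hPc, hPU⟩ := exists_mem_nhds_isClosed_subset (hU.mem_nhds haU)
    obtain ⟨Q, hQn, hQc, hQV⟩ := exists_mem_nhds_isClosed_subset (hV'.mem_nhds hlV')
    have hPQ : P ∩ Q = ∅ := by
      have : P ∩ Q ⊆ U ∩ V' := Set.inter_subset_inter hPU hQV
      rw [Set.disjoint_iff_inter_eq_empty] at hUV
      exact Set.subset_empty_iff.mp (hUV ▸ this)
    obtain ⟨W₀, hW₀o, hzW₀, hW₀⟩ := heq z P Q hPc hQc hPQ
    have hS1 : {k : ℕ | zf k ∈ W₀} ∈ 𝒰 := hzT.eventually_mem (hW₀o.mem_nhds hzW₀)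
    have hS2 : {k : ℕ | g^[k] z ∈ Q} ∈ 𝒰 := hlzT.eventually_mem hQn
    obtain ⟨k, hk1, hk2⟩ := Ultrafilter.nonempty_of_mem (Filter.inter_mem hS1 hS2)
    rcases hW₀ k with h | h
    · exact h (Set.mem_image_of_mem _ hk1) (by rw [hz2 k]; exact mem_of_mem_nhds hPn)
    · exact h (Set.mem_image_of_mem _ hzW₀) hk2
  -- conclusion
  obtain ⟨z, hzA, hlz⟩ := hsur x hx
  have hfix : ℓ x = x := by
    rw [← hlz]
    rw [hidem2 z hzA, hlz]
  have hT : Filter.Tendsto (fun k => g^[k] x) (𝒰 : Filter ℕ) (nhds x) := by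
    have := (hℓ x hx).2
    rwa [hfix] at this
  have hmem2 : ({k : ℕ | g^[k] x ∈ N} ∩ {k : ℕ | n ≤ k}) ∈ 𝒰 :=
    Filter.inter_mem (hT.eventually_mem (hN.mem_nhds hxN)) (htails n)
  obtain ⟨k, hk1, hk2⟩ := Ultrafilter.nonempty_of_mem hmem2
  exact ⟨k, hk2, hk1⟩

end Rec

theorem stmt_9 {X : Type*} [TopologicalSpace X] [CompactSpace X] [T2Space X]
    [ConnectedSpace X] (f : X → X) (hf : Continuous f) (hJ : IsJContraction f) :
    ∃! x, f x = x := by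
  classical
  -- the sets `Y n = f^[n] '' univ`
  set Y : ℕ → Set X := fun n => f^[n] '' Set.univ with hY
  have hYcpt : ∀ n, IsCompact (Y n) := fun n => isCompact_univ.image (hf.iterate n)
  have hYcl : ∀ n, IsClosed (Y n) := fun n => (hYcpt n).isClosed
  have hYpre : ∀ n, IsPreconnected (Y n) := fun n =>
    isPreconnected_univ.image _ (hf.iterate n).continuousOn
  have hYne : ∀ n, (Y n).Nonempty := by
    intro n
    obtain ⟨x⟩ := (inferInstance : Nonempty X)
    exact ⟨f^[n] x, Set.mem_image_of_mem _ (Set.mem_univ x)⟩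
  have hYsucc : ∀ n, Y (n + 1) ⊆ Y n := by
    intro n
    have : Y (n + 1) = f^[n] '' (f '' Set.univ) := by
      rw [hY]
      simp only [Function.iterate_succ, Set.image_comp]
    rw [this]
    exact Set.image_mono (Set.subset_univ _)
  have hYmono : ∀ {m n : ℕ}, m ≤ n → Y n ⊆ Y m := by
    intro m n hmn
    exact antitone_nat_of_succ_le hYsucc hmn
  have hYdir : Directed (· ⊇ ·) Y :=
    fun m n => ⟨max m n, hYmono (le_max_left m n), hYmono (le_max_right m n)⟩
  -- the attractor `A`
  set A : Set X := ⋂ n, Y n with hA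
  have hAcl : IsClosed A := isClosed_iInter hYcl
  have hAsub : ∀ n, A ⊆ Y n := fun n => Set.iInter_subset Y n
  have hAne : A.Nonempty :=
    IsCompact.nonempty_iInter_of_directed_nonempty_isCompact_isClosed Y hYdir hYne hYcpt hYcl
  have hYfim : ∀ n, f '' Y n = Y (n + 1) := by
    intro n
    rw [hY]
    simp only [← Set.image_comp, ← Function.iterate_succ']
  -- full invariance of `A`
  have hfA : f '' A = A := by
    apply Set.Subset.antisymm
    · rintro _ ⟨x, hx, rfl⟩
      apply Set.mem_iInter.mpr
      intro n
      have hfx : f x ∈ Y (n + 1) := by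
        rw [← hYfim n]
        exact Set.mem_image_of_mem f (Set.mem_iInter.mp hx n)
      exact hYsucc n hfx
    · intro x hx
      have hCne : ∀ n, ((f ⁻¹' {x}) ∩ Y n).Nonempty := by
        intro n
        have : x ∈ Y (n + 1) := Set.mem_iInter.mp hx (n + 1)
        rw [← hYfim n] at this
        obtain ⟨z, hz, hz2⟩ := this
        exact ⟨z, by simp [hz2], hz⟩
      have hCcl : ∀ n, IsClosed ((f ⁻¹' {x}) ∩ Y n) :=
        fun n => (IsClosed.preimage hf isClosed_singleton).inter (hYcl n)
      have hCdir : Directed (· ⊇ ·) (fun n => (f ⁻¹' {x}) ∩ Y n) := by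
        intro m n
        obtain ⟨k, hk1, hk2⟩ := hYdir m n
        exact ⟨k, Set.inter_subset_inter_right _ hk1, Set.inter_subset_inter_right _ hk2⟩
      obtain ⟨z, hz⟩ :=
        IsCompact.nonempty_iInter_of_directed_nonempty_isCompact_isClosed
          (fun n => (f ⁻¹' {x}) ∩ Y n) hCdir hCne
          (fun n => (hCcl n).isCompact) hCcl
      simp only [Set.mem_iInter, Set.mem_inter_iff] at hz
      refine ⟨z, Set.mem_iInter.mpr (fun n => (hz n).2), ?_⟩
      have := (hz 0).1
      simpa using this
  have hiter : ∀ k : ℕ, f^[k] '' A = A := by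
    intro k
    induction k with
    | zero => simp
    | succ k ih =>
      rw [Function.iterate_succ, Set.image_comp, hfA, ih]
  -- `A` is preconnected
  have hApre : IsPreconnected A := by
    intro u v hu hv hcov hne1 hne2
    by_contra hempty
    rw [Set.not_nonempty_iff_eq_empty] at hempty
    have hsv : A ∩ u = A ∩ vᶜ := by
      apply Set.Subset.antisymm
      · rintro x ⟨hxA, hxu⟩
        refine ⟨hxA, fun hxv => ?_⟩
        have : x ∈ A ∩ (u ∩ v) := ⟨hxA, hxu, hxv⟩
        rw [hempty] at this
        exact this
      · rintro x ⟨hxA, hxv⟩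
        rcases hcov hxA with h | h
        · exact ⟨hxA, h⟩
        · exact absurd h hxv
    have htu : A ∩ v = A ∩ uᶜ := by
      apply Set.Subset.antisymm
      · rintro x ⟨hxA, hxv⟩
        refine ⟨hxA, fun hxu => ?_⟩
        have : x ∈ A ∩ (u ∩ v) := ⟨hxA, hxu, hxv⟩
        rw [hempty] at this
        exact this
      · rintro x ⟨hxA, hxu⟩
        rcases hcov hxA with h | h
        · exact absurd h hxu
        · exact ⟨hxA, h⟩
    have hscl : IsClosed (A ∩ u) := by
      rw [hsv]; exact hAcl.inter (isClosed_compl_iff.mpr hv)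
    have htcl : IsClosed (A ∩ v) := by
      rw [htu]; exact hAcl.inter (isClosed_compl_iff.mpr hu)
    have hst : Disjoint (A ∩ u) (A ∩ v) := by
      rw [Set.disjoint_iff_inter_eq_empty, ← hempty]
      ext x
      simp only [Set.mem_inter_iff]
      tauto
    obtain ⟨u', v', hu', hv', hsu', htv', hdis⟩ :=
      SeparatedNhds.of_isCompact_isCompact hscl.isCompact htcl.isCompact hst
    have hYsub : ∃ n, Y n ⊆ u' ∪ v' := by
      by_contra hno
      push_neg at hno
      have hne : ∀ n, (Y n \ (u' ∪ v')).Nonempty := by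
        intro n
        obtain ⟨x, hx1, hx2⟩ := Set.not_subset.mp (hno n)
        exact ⟨x, hx1, hx2⟩
      have hdcl : ∀ n, IsClosed (Y n \ (u' ∪ v')) :=
        fun n => (hYcl n).sdiff (hu'.union hv')
      have hddir : Directed (· ⊇ ·) (fun n => Y n \ (u' ∪ v')) := by
        intro m n
        obtain ⟨k, hk1, hk2⟩ := hYdir m n
        exact ⟨k, Set.diff_subset_diff_left hk1, Set.diff_subset_diff_left hk2⟩
      obtain ⟨x, hx⟩ :=
        IsCompact.nonempty_iInter_of_directed_nonempty_isCompact_isClosed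
          (fun n => Y n \ (u' ∪ v')) hddir hne (fun n => (hdcl n).isCompact) hdcl
      simp only [Set.mem_iInter, Set.mem_diff] at hx
      have hxA : x ∈ A := Set.mem_iInter.mpr (fun n => (hx n).1)
      have hxout : x ∉ u' ∪ v' := (hx 0).2
      rcases hcov hxA with h | h
      · exact hxout (Or.inl (hsu' ⟨hxA, h⟩))
      · exact hxout (Or.inr (htv' ⟨hxA, h⟩))
    obtain ⟨n, hn⟩ := hYsub
    obtain ⟨a₁, ha₁⟩ := hne1
    obtain ⟨a₂, ha₂⟩ := hne2
    obtain ⟨w, hw⟩ := hYpre n u' v' hu' hv' hn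
      ⟨a₁, hAsub n ha₁.1, hsu' ha₁⟩ ⟨a₂, hAsub n ha₂.1, htv' ha₂⟩
    rw [Set.disjoint_iff_inter_eq_empty] at hdis
    have : w ∈ u' ∩ v' := hw.2
    rw [hdis] at this
    exact this
  -- every two points of A are equal
  have key : ∀ a ∈ A, ∀ b ∈ A, a = b := by
    intro a haA b hbA
    by_contra hab
    -- the two-set cover separating a and b
    set 𝓤 : Set (Set X) := {({a} : Set X)ᶜ, ({b} : Set X)ᶜ} with h𝓤
    have h𝓤open : ∀ U ∈ 𝓤, IsOpen U := by
      rintro U (rfl | rfl) <;> exact isOpen_compl_singleton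
    have h𝓤cov : ⋃₀ 𝓤 = Set.univ := by
      rw [h𝓤, Set.sUnion_pair]
      ext x
      simp only [Set.mem_union, Set.mem_compl_iff, Set.mem_singleton_iff, Set.mem_univ,
        iff_true]
      by_contra h
      push_neg at h
      exact hab (h.1 ▸ h.2 ▸ rfl)
    obtain ⟨𝓥, hfin, hop, hcov, href, hcontr⟩ := hJ 𝓤 h𝓤open h𝓤cov
    -- choice function φ
    have hc : ∀ V : Set X, ∃ W : Set X, V ∈ 𝓥 → W ∈ 𝓥 ∧ f '' closure V ⊆ W := by
      intro V
      by_cases h : V ∈ 𝓥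
      · obtain ⟨W, hW1, hW2⟩ := hcontr V h
        exact ⟨W, fun _ => ⟨hW1, hW2⟩⟩
      · exact ⟨∅, fun h' => absurd h' h⟩
    choose φ hφ using hc
    -- basic data
    set s : ℕ := hfin.toFinset.card with hs
    obtain ⟨y, hyA, hys⟩ : ∃ y, y ∈ A ∧ f^[s] y = a := by
      have : a ∈ f^[s] '' A := by rw [hiter s]; exact haA
      obtain ⟨y, hy1, hy2⟩ := this
      exact ⟨y, hy1, hy2⟩
    obtain ⟨V₀, hV₀mem, hyV₀⟩ : ∃ V₀, V₀ ∈ 𝓥 ∧ y ∈ V₀ := by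
      have : y ∈ ⋃₀ 𝓥 := hcov ▸ Set.mem_univ y
      obtain ⟨V₀, h1, h2⟩ := this
      exact ⟨V₀, h1, h2⟩
    have hs1 : 1 ≤ s := by
      rw [hs]
      exact Finset.card_pos.mpr ⟨V₀, hfin.mem_toFinset.mpr hV₀mem⟩
    have hinV : ∀ m : ℕ, φ^[m] V₀ ∈ 𝓥 := by
      intro m
      induction m with
      | zero => simpa using hV₀mem
      | succ m ih =>
        rw [Function.iterate_succ_apply']
        exact (hφ _ ih).1
    -- pigeonhole: the φ-orbit of V₀ is eventually periodic
    obtain ⟨i, j, hij, hijeq⟩ : ∃ i j : Fin (s + 1), i ≠ j ∧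
        φ^[(i : ℕ)] V₀ = φ^[(j : ℕ)] V₀ := by
      have hcard : Fintype.card {V // V ∈ hfin.toFinset} < Fintype.card (Fin (s + 1)) := by
        simp [Fintype.card_coe, hs]
      obtain ⟨i, j, hne, heq⟩ := Fintype.exists_ne_map_eq_of_card_lt
        (fun m : Fin (s + 1) => (⟨φ^[(m : ℕ)] V₀,
          hfin.mem_toFinset.mpr (hinV m)⟩ : {V // V ∈ hfin.toFinset})) hcard
      exact ⟨i, j, hne, by simpa using congrArg Subtype.val heq⟩
    -- normalize so that i < j
    obtain ⟨i, j, hij, hijeq⟩ : ∃ i j : ℕ, i < j ∧ j ≤ s ∧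
        φ^[i] V₀ = φ^[j] V₀ := by
      rcases lt_or_gt_of_ne (Fin.val_ne_of_ne hij) with h | h
      · exact ⟨i, j, h, Nat.lt_succ_iff.mp j.isLt, hijeq⟩
      · exact ⟨j, i, h, Nat.lt_succ_iff.mp i.isLt, hijeq.symm⟩
    obtain ⟨hjs, hijeq⟩ := hijeq
    set q : ℕ := j - i with hq
    have hq1 : 1 ≤ q := by omega
    have hper : ∀ d : ℕ, φ^[i + d + q] V₀ = φ^[i + d] V₀ := by
      intro d
      induction d with
      | zero =>
        have : i + 0 + q = j := by omega
        rw [this]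
        simpa using hijeq.symm
      | succ d ih =>
        have h1 : i + (d + 1) + q = (i + d + q) + 1 := by omega
        have h2 : i + (d + 1) = (i + d) + 1 := by omega
        rw [h1, h2, Function.iterate_succ_apply', Function.iterate_succ_apply', ih]
    set W : Set X := φ^[s] V₀ with hW
    have hWmem : W ∈ 𝓥 := hinV s
    have hWper : φ^[q] W = W := by
      rw [hW, ← Function.iterate_add_apply]
      have : q + s = i + (s - i) + q := by omega
      rw [this, hper (s - i)]
      congr 1
      omega
    have hWtrap : f^[q] '' closure W ⊆ W := by
      have := (iterPhi f hφ q hq1 W hWmem).2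
      rwa [hWper] at this
    have haW : a ∈ W := by
      have := (iterPhi f hφ s hs1 V₀ hV₀mem).2
      rw [← hW] at this
      exact this ⟨y, subset_closure hyV₀, hys⟩
    have hWopen : IsOpen W := hop W hWmem
    -- the "equicontinuity" hypothesis for g = f^[q]
    have heq : ∀ z : X, ∀ P Q : Set X, IsClosed P → IsClosed Q → P ∩ Q = ∅ →
        ∃ V : Set X, IsOpen V ∧ z ∈ V ∧
          ∀ k : ℕ, (f^[q])^[k] '' V ⊆ Pᶜ ∨ (f^[q])^[k] '' V ⊆ Qᶜ := by
      intro z P Q hP hQ hPQ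
      set 𝓒 : Set (Set X) := {Pᶜ, Qᶜ} with h𝓒
      have h𝓒open : ∀ C ∈ 𝓒, IsOpen C := by
        rintro C (rfl | rfl)
        exacts [hP.isOpen_compl, hQ.isOpen_compl]
      have h𝓒cov : ⋃₀ 𝓒 = Set.univ := by
        rw [h𝓒, Set.sUnion_pair, ← Set.compl_inter, hPQ, Set.compl_empty]
      obtain ⟨𝓥₂, hfin₂, hop₂, hcov₂, href₂, hcontr₂⟩ := hJ 𝓒 h𝓒open h𝓒cov
      have hc₂ : ∀ V : Set X, ∃ W : Set X, V ∈ 𝓥₂ → W ∈ 𝓥₂ ∧ f '' closure V ⊆ W := by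
        intro V
        by_cases h : V ∈ 𝓥₂
        · obtain ⟨W', hW1, hW2⟩ := hcontr₂ V h
          exact ⟨W', fun _ => ⟨hW1, hW2⟩⟩
        · exact ⟨∅, fun h' => absurd h' h⟩
      choose φ₂ hφ₂ using hc₂
      obtain ⟨V, hVmem, hzV⟩ : ∃ V, V ∈ 𝓥₂ ∧ z ∈ V := by
        have : z ∈ ⋃₀ 𝓥₂ := hcov₂ ▸ Set.mem_univ z
        obtain ⟨V, h1, h2⟩ := this
        exact ⟨V, h1, h2⟩
      refine ⟨V, hop₂ V hVmem, hzV, ?_⟩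
      intro k
      have hsub : ∃ C ∈ 𝓒, (f^[q])^[k] '' V ⊆ C := by
        rcases Nat.eq_zero_or_pos k with rfl | hk
        · obtain ⟨C, hC1, hC2⟩ := href₂ V hVmem
          exact ⟨C, hC1, by simpa using hC2⟩
        · have hqk : 1 ≤ q * k := Nat.one_le_iff_ne_zero.mpr (by positivity)
          have h2 := (iterPhi f hφ₂ (q * k) hqk V hVmem)
          obtain ⟨C, hC1, hC2⟩ := href₂ _ h2.1
          refine ⟨C, hC1, ?_⟩
          rw [← Function.iterate_mul]
          exact ((Set.image_mono subset_closure).trans h2.2).trans hC2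
      obtain ⟨C, hC1, hC2⟩ := hsub
      rcases hC1 with rfl | rfl
      · exact Or.inl hC2
      · exact Or.inr hC2
    -- the trace of W on A is closed in A
    have hBcl : A ∩ closure (A ∩ W) ⊆ A ∩ W := by
      rintro x ⟨hxA, hxcl⟩
      have hxclW : x ∈ closure W :=
        closure_mono Set.inter_subset_right hxcl
      set D : ℕ → Set X := fun n => f^[q * n] '' closure W with hD
      have hDall : ∀ n : ℕ, x ∈ D n := by
        have hDanti : ∀ n : ℕ, D (n + 1) ⊆ D n := by
          intro n
          have h1 : q * (n + 1) = q * n + q := by ring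
          rw [hD]
          simp only [h1, Function.iterate_add, Set.image_comp]
          exact Set.image_mono (hWtrap.trans subset_closure)
        have hDmono : ∀ {m n : ℕ}, m ≤ n → D n ⊆ D m := by
          intro m n hmn
          exact antitone_nat_of_succ_le hDanti hmn
        intro n
        by_contra hxD
        have hDcpt : IsCompact (D n) :=
          (isClosed_closure.isCompact).image (hf.iterate _)
        have hNopen : IsOpen (D n)ᶜ := hDcpt.isClosed.isOpen_compl
        have hsurj : ∀ k : ℕ, (f^[q])^[k] '' A = A := by
          intro k
          rw [← Function.iterate_mul]
          exact hiter (q * k)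
        obtain ⟨k, hk1, hk2⟩ :=
          recurrence (hf.iterate q) hAcl hsurj heq hxA hNopen hxD n
        apply hk2
        have hmem : (f^[q])^[k] x ∈ D k := by
          rw [hD]
          simp only [Function.iterate_mul]
          exact Set.mem_image_of_mem _ hxclW
        exact hDmono hk1 hmem
      have hx1 : x ∈ D 1 := hDall 1
      rw [hD] at hx1
      simp only [mul_one] at hx1
      exact ⟨hxA, hWtrap hx1⟩
    -- W is not allowed to contain both a and b
    obtain ⟨U, hUmem, hWU⟩ := href W hWmem
    have hbW : b ∉ W := by
      rcases hUmem with rfl | rfl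
      · exact absurd (hWU haW) (by simp)
      · intro hbW
        exact absurd (hWU hbW) (by simp)
    -- connectedness finish
    have hcov' : A ⊆ W ∪ (closure (A ∩ W))ᶜ := by
      intro x hxA
      by_cases hx : x ∈ closure (A ∩ W)
      · exact Or.inl (hBcl ⟨hxA, hx⟩).2
      · exact Or.inr hx
    have hne1 : (A ∩ W).Nonempty := ⟨a, haA, haW⟩
    have hne2 : (A ∩ (closure (A ∩ W))ᶜ).Nonempty := by
      refine ⟨b, hbA, fun hbcl => ?_⟩
      exact hbW (hBcl ⟨hbA, hbcl⟩).2
    obtain ⟨w, hwA, hwW, hwC⟩ := hApre W (closure (A ∩ W))ᶜ hWopen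
      isClosed_closure.isOpen_compl hcov' hne1 hne2
    exact hwC (subset_closure ⟨hwA, hwW⟩)
  -- conclusion
  obtain ⟨x₀, hx₀⟩ := hAne
  have hfx₀ : f x₀ ∈ A := hfA ▸ Set.mem_image_of_mem f hx₀
  have hfix : f x₀ = x₀ := key _ hfx₀ _ hx₀
  refine ⟨x₀, hfix, ?_⟩
  intro y hy
  have hyA : y ∈ A := by
    apply Set.mem_iInter.mpr
    intro n
    exact ⟨y, Set.mem_univ y, Function.iterate_fixed hy n⟩
  exact key y hyA x₀ hx₀
end

section
/- Let X be a compact topological space and f : X → X a closed map. Assume that for every x ∈ X with f x ≠ x there is a closed subset B of X such that x ∈ B, f(B) ⊆ B and x ∉ f(B). Then f has a fixed point in X. Moreover, for every x ∈ X with f x ≠ x there is a smallest closed subset B of X such that x ∈ B, f(B) ⊆ B and x ∉ f(B) (i.e., a closed set with these properties contained in every closed set with these properties). -/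
theorem stmt_10 {X : Type*} [TopologicalSpace X] [CompactSpace X] [Nonempty X]
    (f : X → X) (hf : IsClosedMap f)
    (h : ∀ x, f x ≠ x → ∃ B : Set X, IsClosed B ∧ x ∈ B ∧ f '' B ⊆ B ∧ x ∉ f '' B) :
    (∃ x, f x = x) ∧
    ∀ x, f x ≠ x → ∃ B : Set X, (IsClosed B ∧ x ∈ B ∧ f '' B ⊆ B ∧ x ∉ f '' B) ∧
      ∀ B' : Set X, IsClosed B' → x ∈ B' → f '' B' ⊆ B' → x ∉ f '' B' → B ⊆ B' := by
  constructor
  · -- existence of fixed point via a minimal nonempty closed invariant set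
    set S : Set (Set X) := {A | A.Nonempty ∧ IsClosed A ∧ f '' A ⊆ A} with hS
    have hzorn : ∀ c ⊆ S, IsChain (· ⊆ ·) c → c.Nonempty →
        ∃ lb ∈ S, ∀ s ∈ c, lb ⊆ s := by
      intro c hcS hchain hcne
      refine ⟨⋂₀ c, ⟨?_, ?_, ?_⟩, fun s hs => Set.sInter_subset_of_mem hs⟩
      · have : Nonempty c := hcne.to_subtype
        exact IsCompact.nonempty_sInter_of_directed_nonempty_isCompact_isClosed
          (fun a ha b hb => by
            rcases hchain.total ha hb with hab | hba
            exacts [⟨a, ha, le_refl _, hab⟩, ⟨b, hb, hba, le_refl _⟩])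
          (fun U hU => (hcS hU).1) (fun U hU => (hcS hU).2.1.isCompact)
          (fun U hU => (hcS hU).2.1)
      · exact isClosed_sInter fun U hU => (hcS hU).2.1
      · intro y ⟨z, hz, hzy⟩
        intro U hU
        exact (hcS hU).2.2 ⟨z, hz U hU, hzy⟩
    obtain ⟨A, -, hAS, hAmin⟩ := zorn_superset_nonempty S hzorn Set.univ
      ⟨Set.univ_nonempty, isClosed_univ, Set.subset_univ _⟩
    · obtain ⟨hAne, hAcl, hAinv⟩ := hAS
      -- f '' A = A by minimality
      have hfA : f '' A = A := by
        have hmem : f '' A ∈ S := ⟨hAne.image f, hf A hAcl, Set.image_mono (f := f) hAinv⟩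
        exact le_antisymm hAinv (hAmin hmem hAinv)
      obtain ⟨x, hxA⟩ := hAne
      by_contra hno
      push_neg at hno
      obtain ⟨B, hBcl, hxB, hBinv, hxfB⟩ := h x (hno x)
      have hABS : A ∩ B ∈ S := ⟨⟨x, hxA, hxB⟩, hAcl.inter hBcl,
        fun y ⟨z, hz, hzy⟩ => ⟨hAinv ⟨z, hz.1, hzy⟩, hBinv ⟨z, hz.2, hzy⟩⟩⟩
      have hAB : A ⊆ B := (hAmin hABS Set.inter_subset_left).trans Set.inter_subset_right
      exact hxfB (Set.image_mono (f := f) hAB (by rw [hfA]; exact hxA))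
  · intro x hx
    obtain ⟨B₀, hB₀cl, hxB₀, hB₀inv, hxfB₀⟩ := h x hx
    set T : Set (Set X) := {B | IsClosed B ∧ x ∈ B ∧ f '' B ⊆ B ∧ x ∉ f '' B}
    refine ⟨⋂₀ T, ⟨isClosed_sInter fun B hB => hB.1, fun B hB => hB.2.1, ?_, ?_⟩,
      fun B' h1 h2 h3 h4 => Set.sInter_subset_of_mem ⟨h1, h2, h3, h4⟩⟩
    · rintro y ⟨z, hz, hzy⟩ B hB
      exact hB.2.2.1 ⟨z, hz B hB, hzy⟩
    · intro hxf
      exact hxfB₀ (Set.image_mono (f := f) (Set.sInter_subset_of_mem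
        (⟨hB₀cl, hxB₀, hB₀inv, hxfB₀⟩ : B₀ ∈ T)) hxf)
end

section
/- Let (X, d) be a spherically complete ultrametric space with partially ordered value set Γ and f : X → X a function such that for all x, z ∈ X: (i) if x ≠ f x then there exists i ≥ 1 with d(f^i x, f^{i+1} x) < d(x, f x); (ii) if d(z, f x) ≤ d(f x, f² x) then d(z, f z) ≤ d(x, f x). Then f has a fixed point. -/
theorem stmt_11 {X : Type*} [Nonempty X] {Γ : Type*} [PartialOrder Γ] [OrderBot Γ]
    (d : X → X → Γ)
    (hU1 : ∀ x y, d x y = ⊥ ↔ x = y)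
    (hU2 : ∀ x y z γ, d x y ≤ γ → d y z ≤ γ → d x z ≤ γ)
    (hU3 : ∀ x y, d x y = d y x)
    (hsph : ∀ 𝓝 : Set (Set X), 𝓝.Nonempty →
      (∀ C ∈ 𝓝, ∃ x y, C = {z | d x z ≤ d x y}) →
      IsChain (· ⊆ ·) 𝓝 → (⋂₀ 𝓝).Nonempty)
    (f : X → X)
    (h1 : ∀ x, x ≠ f x → ∃ i, 1 ≤ i ∧ d (f^[i] x) (f^[i+1] x) < d x (f x))
    (h2 : ∀ x z, d z (f x) ≤ d (f x) (f (f x)) → d z (f z) ≤ d x (f x)) :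
    ∃ x, f x = x := by
  classical
  -- the ball C x = B(f x, d x (f x))
  set C : X → Set X := fun x => {z | d (f x) z ≤ d x (f x)} with hCdef
  have hbot : ∀ x : X, d x x = ⊥ := fun x => (hU1 x x).mpr rfl
  have L0 : ∀ x, d (f x) (f (f x)) ≤ d x (f x) := by
    intro x
    exact h2 x (f x) (by rw [hbot]; exact bot_le)
  have memC_self : ∀ x, x ∈ C x := by
    intro x
    show d (f x) x ≤ d x (f x)
    rw [hU3]
  have L2 : ∀ x z, z ∈ C (f x) → d z (f z) ≤ d x (f x) := by
    intro x z hz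
    have hz' : d (f (f x)) z ≤ d (f x) (f (f x)) := hz
    have h3 : d (f x) z ≤ d (f x) (f (f x)) := hU2 _ _ _ _ (le_refl _) hz'
    have h4 : d z (f x) ≤ d (f x) (f (f x)) := by rw [hU3]; exact h3
    exact h2 x z h4
  have L1 : ∀ x, C (f x) ⊆ C x := by
    intro x z hz
    have hz' : d (f (f x)) z ≤ d (f x) (f (f x)) := hz
    show d (f x) z ≤ d x (f x)
    exact hU2 _ _ _ _ (L0 x) (hz'.trans (L0 x))
  have L3 : ∀ x z, z ∈ C x → d z (f z) ≤ d x (f x) → C z ⊆ C x := by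
    intro x z hz hr w hw
    have hw' : d (f z) w ≤ d z (f z) := hw
    have h4 : d (f x) (f z) ≤ d x (f x) := hU2 _ _ _ _ hz hr
    show d (f x) w ≤ d x (f x)
    exact hU2 _ _ _ _ h4 (hw'.trans hr)
  have L4 : ∀ x z, z ∈ C (f x) → C z ⊆ C x :=
    fun x z hz => L3 x z (L1 x hz) (L2 x z hz)
  -- the relation: r a b means "b is below a"
  let r : X → X → Prop := fun a b => b = a ∨ C b ⊆ C (f a)
  have rtrans : ∀ {a b c : X}, r a b → r b c → r a c := by
    intro a b c hab hbc
    rcases hab with rfl | hab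
    · exact hbc
    · rcases hbc with rfl | hbc
      · exact Or.inr hab
      · exact Or.inr (hbc.trans ((L1 b).trans hab))
  have hCmono : ∀ a b, r a b → C b ⊆ C a := by
    intro a b hab
    rcases hab with rfl | hab
    · exact subset_rfl
    · exact hab.trans (L1 a)
  have hbound : ∀ c : Set X, IsChain r c → ∃ ub, ∀ a ∈ c, r a ub := by
    intro c hchain
    rcases c.eq_empty_or_nonempty with rfl | hne
    · exact ⟨Classical.arbitrary X, fun a ha => absurd ha (by simp)⟩
    by_cases hmin : ∃ m ∈ c, ∀ a ∈ c, r a m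
    · rcases hmin with ⟨m, _, hmub⟩
      exact ⟨m, hmub⟩
    push_neg at hmin
    -- strict descent step
    have hdesc : ∀ x ∈ c, ∃ x' ∈ c, C x' ⊆ C (f x) := by
      intro x hx
      rcases hmin x hx with ⟨a, ha, hna⟩
      have hax : a ≠ x := by
        rintro rfl
        exact hna (Or.inl rfl)
      rcases hchain ha hx hax with h | h
      · exact absurd h hna
      · rcases h with h | h
        · exact absurd (Or.inl h.symm) hna
        · exact ⟨a, ha, h⟩
    -- the balls form a chain
    have hballs : IsChain (· ⊆ ·) (C '' c) := by
      rintro _ ⟨a, ha, rfl⟩ _ ⟨b, hb, rfl⟩ hne'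
      have hab : a ≠ b := by rintro rfl; exact hne' rfl
      rcases hchain ha hb hab with h | h
      · exact Or.inr (hCmono a b h)
      · exact Or.inl (hCmono b a h)
    have hform : ∀ S ∈ C '' c, ∃ x y, S = {z | d x z ≤ d x y} := by
      rintro _ ⟨a, _, rfl⟩
      refine ⟨f a, a, ?_⟩
      show {z | d (f a) z ≤ d a (f a)} = {z | d (f a) z ≤ d (f a) a}
      rw [hU3 (f a) a]
    rcases hsph (C '' c) (hne.image C) hform hballs with ⟨z, hz⟩
    refine ⟨z, fun a ha => ?_⟩
    rcases hdesc a ha with ⟨a', ha', hsub'⟩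
    rcases hdesc a' ha' with ⟨a'', ha'', hsub''⟩
    have hz'' : z ∈ C a'' := hz _ ⟨a'', ha'', rfl⟩
    have hzfa' : z ∈ C (f a') := hsub'' hz''
    have : C z ⊆ C a' := L4 a' z hzfa'
    exact Or.inr (this.trans hsub')
  obtain ⟨m, hm⟩ := exists_maximal_of_chains_bounded hbound (fun {a b c} => rtrans)
  refine ⟨m, ?_⟩
  by_contra hne
  have hne' : m ≠ f m := fun h => hne h.symm
  obtain ⟨i, hi1, hlt⟩ := h1 m hne'
  set y := f^[i] m with hy
  have hlt' : d y (f y) < d m (f m) := by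
    rwa [Function.iterate_succ_apply' f i m] at hlt
  -- C y ⊆ C (f m)
  have haux : ∀ j : ℕ, C (f^[j+1] m) ⊆ C (f m) := by
    intro j
    induction j with
    | zero => rw [Function.iterate_one]
    | succ k ih =>
        rw [Function.iterate_succ_apply' f (k+1) m]
        exact (L1 _).trans ih
  have hCy : C y ⊆ C (f m) := by
    obtain ⟨j, rfl⟩ : ∃ j, i = j + 1 := ⟨i - 1, (Nat.succ_pred_eq_of_pos hi1).symm⟩
    exact haux j
  have hym : r m y := Or.inr hCy
  rcases hm y hym with h | h
  · rw [h] at hlt'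
    exact lt_irrefl _ hlt'
  · have hmCfy : m ∈ C (f y) := h (memC_self m)
    have := L2 y m hmCfy
    exact absurd hlt' (not_lt_of_ge this)
end

section
/- Let (X, d) be a spherically complete ultrametric space with partially ordered value set Γ and f : X → X a contracting function (d(f x, f y) ≤ d(x, y) for all x, y ∈ X) such that for every x ∈ X with x ≠ f x there exists i ≥ 1 with d(f^i x, f^{i+1} x) < d(x, f x). Then f has a fixed point. -/
theorem stmt_12 {X : Type*} [Nonempty X] {Γ : Type*} [PartialOrder Γ] [OrderBot Γ]
    (d : X → X → Γ)
    (hU1 : ∀ x y, d x y = ⊥ ↔ x = y)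
    (hU2 : ∀ x y z γ, d x y ≤ γ → d y z ≤ γ → d x z ≤ γ)
    (hU3 : ∀ x y, d x y = d y x)
    (hsph : ∀ 𝓝 : Set (Set X), 𝓝.Nonempty →
      (∀ C ∈ 𝓝, ∃ x y, C = {z | d x z ≤ d x y}) →
      IsChain (· ⊆ ·) 𝓝 → (⋂₀ 𝓝).Nonempty)
    (f : X → X)
    (hc : ∀ x y, d (f x) (f y) ≤ d x y)
    (h1 : ∀ x, x ≠ f x → ∃ i, 1 ≤ i ∧ d (f^[i] x) (f^[i+1] x) < d x (f x)) :
    ∃ x, f x = x := by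
  classical
  set B : X → Set X := fun x => {z | d x z ≤ d x (f x)} with hB
  have self_mem : ∀ x, x ∈ B x := fun x => by
    simp only [hB, Set.mem_setOf_eq, (hU1 x x).2 rfl]; exact bot_le
  have fmem : ∀ x, f x ∈ B x := fun x => le_rfl
  -- if y ∈ B x then d y (f y) ≤ d x (f x) and B y ⊆ B x
  have dle : ∀ x y, d x y ≤ d x (f x) → d y (f y) ≤ d x (f x) := by
    intro x y hxy
    have h3 : d y (f x) ≤ d x (f x) := hU2 y x (f x) _ (by rw [hU3]; exact hxy) le_rfl
    exact hU2 y (f x) (f y) _ h3 (le_trans (hc x y) hxy)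
  have key : ∀ x y, d x y ≤ d x (f x) → B y ⊆ B x := by
    intro x y hxy w hw
    exact hU2 x y w _ hxy (le_trans hw (dle x y hxy))
  set S : Set (Set X) := {C | ∃ x, C = B x} with hS
  have hzorn : ∀ c ⊆ S, IsChain (· ⊆ ·) c → ∃ lb ∈ S, ∀ s ∈ c, lb ⊆ s := by
    intro c hcS hchain
    rcases c.eq_empty_or_nonempty with rfl | hcne
    · obtain ⟨x⟩ := ‹Nonempty X›
      exact ⟨B x, ⟨x, rfl⟩, by simp⟩
    · obtain ⟨t, ht⟩ := hsph c hcne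
        (fun C hC => by obtain ⟨x, rfl⟩ := hcS hC; exact ⟨x, f x, rfl⟩) hchain
      refine ⟨B t, ⟨t, rfl⟩, fun s hs => ?_⟩
      obtain ⟨x, rfl⟩ := hcS hs
      exact key x t (ht _ hs)
  obtain ⟨m, hm⟩ := zorn_superset S hzorn
  obtain ⟨z, rfl⟩ := hm.prop
  refine ⟨z, ?_⟩
  by_contra hne
  have hne' : z ≠ f z := fun h => hne h.symm
  obtain ⟨i, hi1, hilt⟩ := h1 z hne'
  set y := f^[i] z with hy
  have hsub : ∀ k, B (f^[k] z) ⊆ B z := by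
    intro k; induction k with
    | zero => simp
    | succ n ih =>
      refine Set.Subset.trans (key (f^[n] z) (f^[n+1] z) ?_) ih
      rw [Function.iterate_succ_apply']
  have hmeq : B y = B z := hm.eq_of_subset ⟨y, rfl⟩ (hsub i)
  have hz : z ∈ B y := hmeq ▸ self_mem z
  have hle : d z (f z) ≤ d y (f y) := dle y z hz
  rw [Function.iterate_succ_apply'] at hilt
  exact lt_irrefl (d z (f z)) (lt_of_le_of_lt hle hilt)
end

section
/- Let (X, d) and (X', d') be ultrametric spaces with partially ordered value sets, φ : X → X' a function and z' ∈ X' an element such that for every x ∈ X with φ x ≠ z' there exists y ∈ X satisfying: (UAT1) d'(φ y, z') < d'(φ x, z'); (UAT2) φ(B(x,y)) ⊆ B'(φ x, z'); (UAT3) for every t ∈ X, if d'(φ x, z') < d'(φ t, z') and φ(B(t,x)) ⊆ B'(φ t, z'), then d(t,x) and d(x,y) are comparable in the value set of (X,d). If (X, d) is spherically complete, then z' ∈ φ(X). -/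
theorem stmt_13 {X X' : Type*} [Nonempty X]
    {Γ Γ' : Type*} [PartialOrder Γ] [OrderBot Γ] [PartialOrder Γ'] [OrderBot Γ']
    (d : X → X → Γ)
    (hU1 : ∀ x y, d x y = ⊥ ↔ x = y)
    (hU2 : ∀ x y z γ, d x y ≤ γ → d y z ≤ γ → d x z ≤ γ)
    (hU3 : ∀ x y, d x y = d y x)
    (d' : X' → X' → Γ')
    (hU1' : ∀ x y, d' x y = ⊥ ↔ x = y)
    (hU2' : ∀ x y z γ, d' x y ≤ γ → d' y z ≤ γ → d' x z ≤ γ)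
    (hU3' : ∀ x y, d' x y = d' y x)
    (φ : X → X') (z' : X')
    (hattr : ∀ x, φ x ≠ z' → ∃ y,
      d' (φ y) z' < d' (φ x) z' ∧
      (∀ w, d x w ≤ d x y → d' (φ x) (φ w) ≤ d' (φ x) z') ∧
      (∀ t, d' (φ x) z' < d' (φ t) z' →
        (∀ w, d t w ≤ d t x → d' (φ t) (φ w) ≤ d' (φ t) z') →
        (d t x ≤ d x y ∨ d x y ≤ d t x)))
    (hsph : ∀ 𝓝 : Set (Set X), 𝓝.Nonempty →
      (∀ C ∈ 𝓝, ∃ x y, C = {z | d x z ≤ d x y}) →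
      IsChain (· ⊆ ·) 𝓝 → (⋂₀ 𝓝).Nonempty) :
    z' ∈ Set.range φ := by
  by_contra hz
  have hne : ∀ x, φ x ≠ z' := fun x h => hz ⟨x, h⟩
  choose y h1 h2 h3 using fun x => hattr x (hne x)
  -- if b is in the ball of a, then d'(φ b, z') ≤ d'(φ a, z')
  have hdrop : ∀ a b : X, d a b ≤ d a (y a) → d' (φ b) z' ≤ d' (φ a) z' := by
    intro a b hb
    exact hU2' (φ b) (φ a) z' _ (by rw [hU3']; exact h2 a b hb) le_rfl
  -- relation: `r a b` means "b is strictly below a" (or equal)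
  set r : X → X → Prop := fun a b => b = a ∨
    ((∀ w, d b w ≤ d b (y b) → d a w ≤ d a (y a)) ∧ d' (φ b) z' < d' (φ a) z')
    with hr
  have htrans : ∀ {a b c : X}, r a b → r b c → r a c := by
    intro a b c hab hbc
    rw [hr] at hab hbc ⊢
    rcases hbc with rfl | ⟨hsub, hlt⟩
    · exact hab
    rcases hab with rfl | ⟨hsub', hlt'⟩
    · exact Or.inr ⟨hsub, hlt⟩
    · exact Or.inr ⟨fun w hw => hsub' w (hsub w hw), hlt.trans hlt'⟩
  have hbdd : ∀ c : Set X, IsChain r c → ∃ ub, ∀ a ∈ c, r a ub := by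
    intro c hc
    rcases c.eq_empty_or_nonempty with rfl | hcne
    · exact ⟨Classical.arbitrary X, fun a ha => absurd ha (Set.notMem_empty a)⟩
    have hchain : IsChain (· ⊆ ·) ((fun x => {w | d x w ≤ d x (y x)}) '' c) := by
      rintro _ ⟨a, ha, rfl⟩ _ ⟨b, hb, rfl⟩ hne2
      rcases eq_or_ne a b with rfl | hab
      · exact absurd rfl hne2
      rcases hc ha hb hab with h | h
      · rw [hr] at h
        rcases h with rfl | ⟨hsub, _⟩
        · exact absurd rfl hne2
        · exact Or.inr (fun w hw => hsub w hw)
      · rw [hr] at h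
        rcases h with rfl | ⟨hsub, _⟩
        · exact absurd rfl hne2
        · exact Or.inl (fun w hw => hsub w hw)
    obtain ⟨z, hzmem⟩ := hsph _ (hcne.image _)
      (by rintro _ ⟨a, ha, rfl⟩; exact ⟨a, y a, rfl⟩) hchain
    have hzball : ∀ a ∈ c, d a z ≤ d a (y a) :=
      fun a ha => hzmem _ ⟨a, ha, rfl⟩
    by_cases hmin : ∃ m ∈ c, ∀ a ∈ c, r a m
    · obtain ⟨m, _, hm⟩ := hmin
      exact ⟨m, hm⟩
    push_neg at hmin
    refine ⟨z, fun x hx => ?_⟩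
    obtain ⟨a, ha, hax⟩ := hmin x hx
    have haneq : a ≠ x := by
      rintro rfl; exact hax (by rw [hr]; exact Or.inl rfl)
    have hxa : r x a := (hc hx ha haneq.symm).resolve_right hax
    rw [hr] at hxa
    have hstrict : (∀ w, d a w ≤ d a (y a) → d x w ≤ d x (y x)) ∧
        d' (φ a) z' < d' (φ x) z' := hxa.resolve_left (fun h => haneq h)
    have hzlt : d' (φ z) z' < d' (φ x) z' :=
      lt_of_le_of_lt (hdrop a z (hzball a ha)) hstrict.2
    have hsub : ∀ w, d x w ≤ d x z → d' (φ x) (φ w) ≤ d' (φ x) z' :=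
      fun w hw => h2 x w (hw.trans (hzball x hx))
    rcases h3 z x hzlt hsub with hcase | hcase
    · exfalso
      have : d' (φ x) z' ≤ d' (φ z) z' :=
        hdrop z x (by rw [hU3]; exact hcase)
      exact absurd (lt_of_lt_of_le hzlt this) (lt_irrefl _)
    · rw [hr]
      exact Or.inr ⟨fun w hw =>
        hU2 x z w _ (hzball x hx) ((hw.trans hcase).trans (hzball x hx)), hzlt⟩
  obtain ⟨m, hm⟩ := exists_maximal_of_chains_bounded hbdd (fun {a b c} => htrans)
  have hym : r m (y m) := by
    rcases h3 (y m) m (h1 m) (h2 m) with hcase | hcase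
    · exfalso
      have : d' (φ m) z' ≤ d' (φ (y m)) z' :=
        hdrop (y m) m (by rw [hU3]; exact hcase)
      exact absurd (lt_of_lt_of_le (h1 m) this) (lt_irrefl _)
    · rw [hr]
      exact Or.inr ⟨fun w hw => hU2 m (y m) w _ le_rfl (hw.trans hcase), h1 m⟩
  have hmy := hm (y m) hym
  rw [hr] at hmy
  rcases hmy with heq | ⟨_, hlt⟩
  · exact absurd (h1 m) (by rw [← heq]; exact lt_irrefl _)
  · exact absurd ((h1 m).trans hlt) (lt_irrefl _)
end

section
/- Let K be a field with a valuation v : K → Γ₀ into a linearly ordered commutative group with zero (multiplicative notation: v(x) = 0 ⟺ x = 0, v(xy) = v(x)v(y), v(x+y) ≤ max{v(x), v(y)}, with v(1) = 1), and let 𝓜 = {x ∈ K : v(x) < 1} be the valuation ideal. Assume that every distinguished nest of ultrametric balls in 𝓜 has nonempty intersection. Let f : 𝓜 → 𝓜 be a function with v(f x − f y) ≤ v(x − y) for all x, y ∈ 𝓜, and suppose that for every x ∈ 𝓜 there is j ∈ ℕ such that v(f^j x − f^{j+1} x) ≤ v(x − f x)². Then f has a fixed point in 𝓜. -/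
theorem stmt_14 {K : Type*} [Field K] {Γ₀ : Type*} [LinearOrderedCommGroupWithZero Γ₀]
    (v : Valuation K Γ₀)
    (hstages : ∀ 𝓝 : Set (Set K), 𝓝.Nonempty →
      (∀ C ∈ 𝓝, ∃ x y, v x < 1 ∧ v y < 1 ∧ C = {z | v (x - z) ≤ v (x - y)}) →
      IsChain (· ⊆ ·) 𝓝 →
      (∀ x y, v x < 1 → v y < 1 → {z | v (x - z) ≤ v (x - y)} ∈ 𝓝 →
        ∃ x' y', v x' < 1 ∧ v y' < 1 ∧ v (x' - y') ≤ v (x - y) ^ 2 ∧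
          {z | v (x' - z) ≤ v (x' - y')} ∈ 𝓝) →
      (⋂₀ 𝓝).Nonempty)
    (f : K → K) (hmaps : ∀ x, v x < 1 → v (f x) < 1)
    (hc : ∀ x y, v x < 1 → v y < 1 → v (f x - f y) ≤ v (x - y))
    (hd : ∀ x, v x < 1 → ∃ j : ℕ, v (f^[j] x - f^[j+1] x) ≤ v (x - f x) ^ 2) :
    ∃ x, v x < 1 ∧ f x = x := by
  classical
  -- notation
  set B : K → Set K := fun x => {z | v (x - z) ≤ v (x - f x)} with hB
  -- ultrametric triangle through a middle point
  have vtri : ∀ a b c : K, v (a - c) ≤ max (v (a - b)) (v (b - c)) := by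
    intro a b c
    have h : a - c = (a - b) + (b - c) := by ring
    rw [h]; exact v.map_add _ _
  -- the "radius" v (x - f x) is < 1 for x in the maximal ideal
  have hrM : ∀ x, v x < 1 → v (x - f x) < 1 := fun x hx =>
    lt_of_le_of_lt (v.map_sub x (f x)) (max_lt hx (hmaps x hx))
  -- members of balls are in the maximal ideal
  have hBM : ∀ x z, v x < 1 → z ∈ B x → v z < 1 := by
    intro x z hx hz
    have h : z = x - (x - z) := by ring
    rw [h]
    exact lt_of_le_of_lt (v.map_sub _ _) (max_lt hx (lt_of_le_of_lt hz (hrM x hx)))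
  have hself : ∀ x, x ∈ B x := by
    intro x; simp only [B, Set.mem_setOf_eq, sub_self, v.map_zero]; exact zero_le'
  -- key monotonicity: if y is in B x then B y ⊆ B x and radius decreases
  have hmono : ∀ x y, v x < 1 → v y < 1 → v (x - y) ≤ v (x - f x) →
      v (y - f y) ≤ v (x - f x) ∧ B y ⊆ B x := by
    intro x y hx hy hxy
    have hr : v (y - f y) ≤ v (x - f x) := by
      have h1 : v (y - f y) ≤ max (v (y - x)) (v (x - f y)) := vtri _ _ _
      have h2 : v (x - f y) ≤ max (v (x - f x)) (v (f x - f y)) := vtri _ _ _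
      have h3 : v (f x - f y) ≤ v (x - y) := hc x y hx hy
      have h4 : v (y - x) = v (x - y) := v.map_sub_swap y x
      refine h1.trans (max_le (h4.le.trans hxy) (h2.trans (max_le le_rfl (h3.trans hxy))))
    refine ⟨hr, fun z hz => ?_⟩
    have hz' : v (y - z) ≤ v (y - f y) := hz
    exact le_trans ((vtri x y z).trans (max_le hxy (hz'.trans hr))) le_rfl
  -- equal balls have equal radii (one direction suffices)
  have hrad : ∀ a b x y : K, {z | v (a - z) ≤ v (a - b)} = {z | v (x - z) ≤ v (x - y)} →
      v (a - b) ≤ v (x - y) := by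
    intro a b x y h
    have ha : a ∈ {z | v (x - z) ≤ v (x - y)} := by
      rw [← h]; simp only [Set.mem_setOf_eq, sub_self, v.map_zero]; exact zero_le'
    have hb : b ∈ {z | v (x - z) ≤ v (x - y)} := by
      rw [← h]; exact le_rfl
    have h4 : v (a - x) = v (x - a) := v.map_sub_swap a x
    exact (vtri a x b).trans (max_le (h4.le.trans ha) hb)
  -- iterates stay in the maximal ideal and in B x
  have hit : ∀ x, v x < 1 → ∀ n, v (f^[n] x) < 1 ∧ v (x - f^[n] x) ≤ v (x - f x) := by
    intro x hx n
    induction n with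
    | zero =>
      refine ⟨hx, ?_⟩
      simp only [Function.iterate_zero, id_eq, sub_self, v.map_zero]; exact zero_le'
    | succ n ih =>
      rw [Function.iterate_succ_apply']
      refine ⟨hmaps _ ih.1, ?_⟩
      have h2 : v (f x - f (f^[n] x)) ≤ v (x - f^[n] x) := hc x _ hx ih.1
      exact (vtri x (f x) (f (f^[n] x))).trans (max_le le_rfl (h2.trans ih.2))
  -- the step function g
  choose! j hj using hd
  set g : K → K := fun x => f^[j x] x with hg
  have hgM : ∀ x, v x < 1 → v (g x) < 1 := fun x hx => (hit x hx (j x)).1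
  have hgB : ∀ x, v x < 1 → v (x - g x) ≤ v (x - f x) := fun x hx => (hit x hx (j x)).2
  have hgr : ∀ x, v x < 1 → v (g x - f (g x)) ≤ v (x - f x) ^ 2 := by
    intro x hx
    have := hj x hx
    rwa [Function.iterate_succ_apply'] at this
  have hgsub : ∀ x, v x < 1 → B (g x) ⊆ B x := fun x hx =>
    (hmono x (g x) hx (hgM x hx) (hgB x hx)).2
  -- iterates of g
  have hgit : ∀ x, v x < 1 → ∀ n, v (g^[n] x) < 1 := by
    intro x hx n
    induction n with
    | zero => exact hx
    | succ n ih => rw [Function.iterate_succ_apply']; exact hgM _ ih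
  have hgsub2 : ∀ x, v x < 1 → ∀ n m, n ≤ m → B (g^[m] x) ⊆ B (g^[n] x) := by
    intro x hx n m hnm
    induction m with
    | zero => rw [Nat.le_zero.mp hnm]
    | succ m ih =>
      rcases Nat.lt_or_ge n (m+1) with h | h
      · have h' : n ≤ m := Nat.lt_succ_iff.mp h
        rw [Function.iterate_succ_apply']
        exact le_trans (hgsub _ (hgit x hx m)) (ih h')
      · rw [Nat.le_antisymm hnm h]
  -- "good" families of balls
  set Good : Set (Set K) → Prop := fun C =>
    (∀ A ∈ C, ∃ x, v x < 1 ∧ A = B x) ∧ IsChain (· ⊆ ·) C ∧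
    (∀ x, v x < 1 → B x ∈ C → ∃ x', v x' < 1 ∧ B x' ∈ C ∧
      v (x' - f x') ≤ v (x - f x) ^ 2) with hGood
  -- closure of a chain of iterated-g balls rooted at a point of the ideal
  have hclos : ∀ w, v w < 1 → ∀ x, v x < 1 → ∀ n : ℕ, B x = B (g^[n] w) →
      ∃ x', v x' < 1 ∧ B x' = B (g^[n+1] w) ∧ v (x' - f x') ≤ v (x - f x) ^ 2 := by
    intro w hw x hx n heq
    have hwn : v (g^[n] w) < 1 := hgit w hw n
    have hwn1 : v (g^[n+1] w) < 1 := hgit w hw (n+1)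
    refine ⟨g^[n+1] w, hwn1, rfl, ?_⟩
    have h1 : v (g^[n+1] w - f (g^[n+1] w)) ≤ v (g^[n] w - f (g^[n] w)) ^ 2 := by
      rw [Function.iterate_succ_apply']
      exact hgr _ hwn
    have h2 : v (g^[n] w - f (g^[n] w)) ≤ v (x - f x) := hrad _ _ _ _ heq.symm
    exact h1.trans (pow_le_pow_left' h2 2)
  -- the initial good chain
  have h0 : v (0 : K) < 1 := by rw [v.map_zero]; exact zero_lt_one
  set C₀ : Set (Set K) := Set.range (fun n : ℕ => B (g^[n] (0 : K))) with hC₀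
  have hGoodC₀ : Good C₀ := by
    refine ⟨?_, ?_, ?_⟩
    · rintro A ⟨n, rfl⟩
      exact ⟨g^[n] 0, hgit 0 h0 n, rfl⟩
    · rintro A ⟨n, rfl⟩ A' ⟨m, rfl⟩ _
      rcases Nat.le_total n m with h | h
      · exact Or.inr (hgsub2 0 h0 n m h)
      · exact Or.inl (hgsub2 0 h0 m n h)
    · intro x hx hmem
      obtain ⟨n, hn⟩ := hmem
      obtain ⟨x', hx', heq, hle⟩ := hclos 0 h0 x hx n hn.symm
      exact ⟨x', hx', ⟨n+1, heq.symm⟩, hle⟩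
  -- Zorn's lemma to get a maximal good chain
  obtain ⟨𝓝, hC₀N, hNmem, hNmax⟩ :=
    zorn_subset_nonempty {C | Good C} (by
      intro c hc hchain hne
      refine ⟨⋃₀ c, ⟨?_, ?_, ?_⟩, fun s hs => Set.subset_sUnion_of_mem hs⟩
      · rintro A ⟨C, hC, hA⟩
        exact (hc hC).1 A hA
      · rintro A ⟨C, hC, hA⟩ A' ⟨C', hC', hA'⟩ hne'
        rcases hchain.total hC hC' with h | h
        · exact (hc hC').2.1 (h hA) hA' hne'
        · exact (hc hC).2.1 hA (h hA') hne'
      · intro x hx hmem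
        obtain ⟨C, hC, hxC⟩ := hmem
        obtain ⟨x', hx', hmem', hle⟩ := (hc hC).2.2 x hx hxC
        exact ⟨x', hx', ⟨C, hC, hmem'⟩, hle⟩) C₀ hGoodC₀
  have hGoodN : Good 𝓝 := hNmem
  -- 𝓝 satisfies the hypotheses of hstages
  have hNne : 𝓝.Nonempty := ⟨B (g^[0] 0), hC₀N ⟨0, rfl⟩⟩
  have hforms : ∀ C ∈ 𝓝, ∃ x y, v x < 1 ∧ v y < 1 ∧ C = {z | v (x - z) ≤ v (x - y)} := by
    intro C hC
    obtain ⟨x, hx, rfl⟩ := hGoodN.1 C hC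
    exact ⟨x, f x, hx, hmaps x hx, rfl⟩
  have hdist : ∀ x y, v x < 1 → v y < 1 → {z | v (x - z) ≤ v (x - y)} ∈ 𝓝 →
      ∃ x' y', v x' < 1 ∧ v y' < 1 ∧ v (x' - y') ≤ v (x - y) ^ 2 ∧
        {z | v (x' - z) ≤ v (x' - y')} ∈ 𝓝 := by
    intro x y hx hy hmem
    obtain ⟨c, hcM, hceq⟩ := hGoodN.1 _ hmem
    have hcmem : B c ∈ 𝓝 := hceq ▸ hmem
    obtain ⟨x', hx', hmem', hle⟩ := hGoodN.2.2 c hcM hcmem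
    have hr : v (c - f c) ≤ v (x - y) := hrad _ _ _ _ hceq.symm
    exact ⟨x', f x', hx', hmaps x' hx', hle.trans (pow_le_pow_left' hr 2), hmem'⟩
  obtain ⟨y, hy⟩ := hstages 𝓝 hNne hforms hGoodN.2.1 hdist
  have hyball : ∀ c, v c < 1 → B c ∈ 𝓝 → v (c - y) ≤ v (c - f c) :=
    fun c _ hcN => hy _ hcN
  have hyM : v y < 1 := hBM _ y (hgit 0 h0 0) (hy _ (hC₀N ⟨0, rfl⟩))
  -- claim y is a fixed point
  refine ⟨y, hyM, ?_⟩
  by_contra hne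
  have hr0 : v (y - f y) ≠ 0 := by
    rw [v.ne_zero_iff]
    intro h
    exact hne (sub_eq_zero.mp h).symm
  -- extend 𝓝 by the g-orbit of y; by maximality it's already inside
  set C' : Set (Set K) := 𝓝 ∪ Set.range (fun n : ℕ => B (g^[n] y)) with hC'
  have hsubN : ∀ A ∈ 𝓝, ∀ n : ℕ, B (g^[n] y) ⊆ A := by
    intro A hA n
    obtain ⟨c, hcM, rfl⟩ := hGoodN.1 A hA
    have h1 : B y ⊆ B c := (hmono c y hcM hyM (hyball c hcM hA)).2
    exact le_trans (hgsub2 y hyM 0 n (Nat.zero_le n)) h1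
  have hGoodC' : Good C' := by
    refine ⟨?_, ?_, ?_⟩
    · rintro A (hA | ⟨n, rfl⟩)
      · exact hGoodN.1 A hA
      · exact ⟨g^[n] y, hgit y hyM n, rfl⟩
    · rintro A (hA | ⟨n, rfl⟩) A' (hA' | ⟨m, rfl⟩) hne'
      · exact hGoodN.2.1 hA hA' hne'
      · exact Or.inr (hsubN A hA m)
      · exact Or.inl (hsubN A' hA' n)
      · rcases Nat.le_total n m with h | h
        · exact Or.inr (hgsub2 y hyM n m h)
        · exact Or.inl (hgsub2 y hyM m n h)
    · rintro x hx (hmem | ⟨n, hn⟩)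
      · obtain ⟨x', hx', hmem', hle⟩ := hGoodN.2.2 x hx hmem
        exact ⟨x', hx', Or.inl hmem', hle⟩
      · obtain ⟨x', hx', heq, hle⟩ := hclos y hyM x hx n hn.symm
        exact ⟨x', hx', Or.inr ⟨n+1, heq.symm⟩, hle⟩
  have hCsub : C' ⊆ 𝓝 := hNmax hGoodC' Set.subset_union_left
  have hgyN : B (g y) ∈ 𝓝 := hCsub (Or.inr ⟨1, by simp⟩)
  -- derive the contradiction
  have hgyM : v (g y) < 1 := hgM y hyM
  have h1 : v (g y - y) ≤ v (y - f y) ^ 2 :=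
    (hyball (g y) hgyM hgyN).trans (hgr y hyM)
  have h2 : v (y - g y) ≤ v (y - f y) ^ 2 := (v.map_sub_swap y (g y)).le.trans h1
  have h3 : v (g y - f (g y)) ≤ v (y - f y) ^ 2 := hgr y hyM
  have h4 : v (f (g y) - f y) ≤ v (y - f y) ^ 2 :=
    (hc (g y) y hgyM hyM).trans h1
  have h5 : v (y - f y) ≤ v (y - f y) ^ 2 := by
    refine (vtri y (g y) (f y)).trans (max_le h2 ?_)
    exact (vtri (g y) (f (g y)) (f y)).trans (max_le h3 h4)
  have h6 : v (y - f y) ^ 2 < v (y - f y) := by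
    have := mul_lt_mul_of_pos_left (hrM y hyM) (zero_lt_iff.mpr hr0)
    rw [mul_one] at this
    calc v (y - f y) ^ 2 = v (y - f y) * v (y - f y) := sq _
    _ < v (y - f y) := this
  exact absurd (h5.trans_lt h6) (lt_irrefl _)
end

section
/- Let (X, d) be a complete metric space and f : X → X a function that is contracting (d(f x, f y) ≤ d(x, y) for all x, y ∈ X) and strictly contracting on orbits, i.e., there is a real number C with 0 < C < 1 such that d(f x, f² x) ≤ C · d(x, f x) for all x ∈ X. Then f has a fixed point. -/
theorem stmt_15 {X : Type*} [MetricSpace X] [CompleteSpace X] [Nonempty X]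
    (f : X → X)
    (hc : ∀ x y, dist (f x) (f y) ≤ dist x y)
    (C : ℝ) (hC0 : 0 < C) (hC1 : C < 1)
    (hso : ∀ x, dist (f x) (f (f x)) ≤ C * dist x (f x)) :
    ∃ x, f x = x := by
  obtain ⟨x₀⟩ := ‹Nonempty X›
  set u : ℕ → X := fun n => f^[n] x₀ with hu
  have key : ∀ n, dist (u n) (u (n + 1)) ≤ dist x₀ (f x₀) * C ^ n := by
    intro n
    induction n with
    | zero => simp [hu]
    | succ n ih =>
      have h1 : u (n + 1) = f (u n) := by simp [hu, Function.iterate_succ_apply']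
      have h2 : u (n + 2) = f (f (u n)) := by
        simp [hu, Function.iterate_succ_apply']
      rw [h1, h2]
      calc dist (f (u n)) (f (f (u n))) ≤ C * dist (u n) (f (u n)) := hso _
        _ = C * dist (u n) (u (n + 1)) := by rw [h1]
        _ ≤ C * (dist x₀ (f x₀) * C ^ n) := by
            exact mul_le_mul_of_nonneg_left ih hC0.le
        _ = dist x₀ (f x₀) * C ^ (n + 1) := by ring
  have hcauchy : CauchySeq u :=
    cauchySeq_of_le_geometric C (dist x₀ (f x₀)) hC1 key
  obtain ⟨a, ha⟩ := cauchySeq_tendsto_of_complete hcauchy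
  refine ⟨a, ?_⟩
  have hf : Continuous f := (LipschitzWith.of_dist_le_mul (K := 1) (by intro x y; simpa using hc x y)).continuous
  have h1 : Filter.Tendsto (fun n => f (u n)) Filter.atTop (nhds (f a)) :=
    (hf.tendsto a).comp ha
  have h2 : Filter.Tendsto (fun n => f (u n)) Filter.atTop (nhds a) := by
    have : (fun n => f (u n)) = fun n => u (n + 1) := by
      funext n; simp [hu, Function.iterate_succ_apply']
    rw [this]
    exact ha.comp (Filter.tendsto_add_atTop_nat 1)
  exact tendsto_nhds_unique h1 h2
end

section
/- Let (G, <, +) be a linearly ordered abelian group whose order ball space is spherically complete, i.e., every nonempty chain (under inclusion) of order balls B_o(g; r) = {z ∈ G : |g − z| ≤ r} (g ∈ G, 0 ≤ r ∈ G) has nonempty intersection. Let f : G → G be o-contracting, i.e., |f x − f y| ≤ |x − y| for all x, y ∈ G, and strictly o-contracting on orbits, i.e., there are positive natural numbers m < n such that n·|f x − f² x| ≤ m·|x − f x| for all x ∈ G (where n·a denotes the n-fold sum a + ⋯ + a). Then f has a fixed point. -/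
section Stmt16Aux

variable {G : Type*} [AddCommGroup G] [LinearOrder G] [IsOrderedAddMonoid G]

private lemma nat_pow_gap' {m n : ℕ} (hm : 0 < m) (hmn : m < n) (C : ℕ) :
    ∃ j, 1 ≤ j ∧ C * m ^ j ≤ n ^ j := by
  have hm' : (0 : ℚ) < (m : ℚ) := by exact_mod_cast hm
  have hy : (1 : ℚ) < (n : ℚ) / m := by
    rw [lt_div_iff₀ hm']; simpa using (by exact_mod_cast hmn : (m : ℚ) < n)
  obtain ⟨j, hj⟩ := pow_unbounded_of_one_lt (C : ℚ) hy
  have hq : (C : ℚ) * (m : ℚ) ^ j ≤ (n : ℚ) ^ j := by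
    have h1 : (C : ℚ) * (m : ℚ) ^ j ≤ ((n : ℚ) / m) ^ j * (m : ℚ) ^ j :=
      mul_le_mul_of_nonneg_right hj.le (by positivity)
    calc (C : ℚ) * (m : ℚ) ^ j ≤ ((n : ℚ) / m) ^ j * (m : ℚ) ^ j := h1
      _ = (n : ℚ) ^ j := by
          rw [div_pow, div_mul_eq_mul_div, mul_div_assoc, div_self (by positivity), mul_one]
  have hnat : C * m ^ j ≤ n ^ j := by exact_mod_cast hq
  refine ⟨j + 1, by omega, ?_⟩
  calc C * m ^ (j + 1) = C * m ^ j * m := by ring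
    _ ≤ n ^ j * m := Nat.mul_le_mul_right m hnat
    _ ≤ n ^ j * n := Nat.mul_le_mul_left _ (le_of_lt hmn)
    _ = n ^ (j + 1) := by ring

variable {f : G → G} {m n : ℕ}

private lemma geom' (hso : ∀ x, n • |f x - f (f x)| ≤ m • |x - f x|) :
    ∀ (j : ℕ) (x : G), n ^ j • |f^[j] x - f (f^[j] x)| ≤ m ^ j • |x - f x| := by
  intro j
  induction j with
  | zero => intro x; simp
  | succ j ih =>
    intro x
    rw [Function.iterate_succ_apply]
    calc n ^ (j + 1) • |f^[j] (f x) - f (f^[j] (f x))|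
        = n • (n ^ j • |f^[j] (f x) - f (f^[j] (f x))|) := by
          rw [smul_smul, pow_succ']
      _ ≤ n • (m ^ j • |f x - f (f x)|) := nsmul_le_nsmul_right (ih (f x)) n
      _ = m ^ j • (n • |f x - f (f x)|) := by rw [smul_smul, smul_smul, mul_comm]
      _ ≤ m ^ j • (m • |x - f x|) := nsmul_le_nsmul_right (hso x) _
      _ = m ^ (j + 1) • |x - f x| := by rw [smul_smul, pow_succ]

private lemma orbit' (hmn : m < n) (hso : ∀ x, n • |f x - f (f x)| ≤ m • |x - f x|) :
    ∀ (j : ℕ) (x : G), (n - m) • |x - f^[j] x| ≤ n • |x - f x| := by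
  intro j
  induction j with
  | zero => intro x; simpa using nsmul_nonneg (abs_nonneg _) n
  | succ j ih =>
    intro x
    rw [Function.iterate_succ_apply]
    calc (n - m) • |x - f^[j] (f x)|
        ≤ (n - m) • (|x - f x| + |f x - f^[j] (f x)|) :=
          nsmul_le_nsmul_right (abs_sub_le x (f x) (f^[j] (f x))) _
      _ = (n - m) • |x - f x| + (n - m) • |f x - f^[j] (f x)| := smul_add _ _ _
      _ ≤ (n - m) • |x - f x| + n • |f x - f (f x)| := add_le_add le_rfl (ih (f x))
      _ ≤ (n - m) • |x - f x| + m • |x - f x| := add_le_add le_rfl (hso x)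
      _ = n • |x - f x| := by rw [← add_nsmul, Nat.sub_add_cancel hmn.le]

private lemma small' (hm : 0 < m) (hmn : m < n)
    (hso : ∀ x, n • |f x - f (f x)| ≤ m • |x - f x|) (C : ℕ) (x : G) :
    ∃ j, 1 ≤ j ∧ C • |f^[j] x - f (f^[j] x)| ≤ |x - f x| := by
  obtain ⟨j, hj1, hle⟩ := nat_pow_gap' hm hmn C
  refine ⟨j, hj1, ?_⟩
  have h1 : (C * m ^ j) • |f^[j] x - f (f^[j] x)| ≤ n ^ j • |f^[j] x - f (f^[j] x)| :=
    nsmul_le_nsmul_left (abs_nonneg _) hle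
  have h2 : m ^ j • (C • |f^[j] x - f (f^[j] x)|) ≤ m ^ j • |x - f x| := by
    rw [smul_smul, mul_comm]
    exact h1.trans (geom' hso j x)
  exact le_of_nsmul_le_nsmul_right (by positivity) h2


/-- the strict part of the order used for Zorn's lemma -/
private def le'' (f : G → G) (n : ℕ) (w x : G) : Prop :=
  |x - w| + (2 * n + 2) • ((n + 1) • |w - f w|) ≤ (n + 1) • |x - f x|

/-- the order used for Zorn's lemma -/
private def LeR (f : G → G) (n : ℕ) (w x : G) : Prop :=
  w = x ∨ le'' f n w x

private lemma R_le_KR (f : G → G) (n : ℕ) (x : G) :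
    (n + 1) • |x - f x| ≤ (2 * n + 2) • ((n + 1) • |x - f x|) := by
  have h0 : 0 ≤ (n + 1) • |x - f x| := nsmul_nonneg (abs_nonneg _) _
  calc (n + 1) • |x - f x| = 1 • ((n + 1) • |x - f x|) := (one_nsmul _).symm
    _ ≤ (2 * n + 2) • ((n + 1) • |x - f x|) := nsmul_le_nsmul_left h0 (by omega)

private lemma le''_trans {a b c : G} (h1 : le'' f n c b) (h2 : le'' f n b a) :
    le'' f n c a := by
  unfold le'' at *
  calc |a - c| + (2 * n + 2) • ((n + 1) • |c - f c|)
      ≤ (|a - b| + |b - c|) + (2 * n + 2) • ((n + 1) • |c - f c|) :=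
        add_le_add (abs_sub_le a b c) le_rfl
    _ = |a - b| + (|b - c| + (2 * n + 2) • ((n + 1) • |c - f c|)) := add_assoc _ _ _
    _ ≤ |a - b| + (n + 1) • |b - f b| := add_le_add le_rfl h1
    _ ≤ |a - b| + (2 * n + 2) • ((n + 1) • |b - f b|) := add_le_add le_rfl (R_le_KR f n b)
    _ ≤ (n + 1) • |a - f a| := h2

private lemma LeR_trans {a b c : G} (h1 : LeR f n c b) (h2 : LeR f n b a) :
    LeR f n c a := by
  rcases h1 with rfl | h1
  · exact h2
  rcases h2 with rfl | h2
  · exact Or.inr h1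
  exact Or.inr (le''_trans h1 h2)

private lemma le''_antisymm {w x : G} (h1 : le'' f n w x) (h2 : le'' f n x w) :
    w = x := by
  unfold le'' at h1 h2
  have h3 := add_le_add h1 h2
  have h4 : (|x - w| + (n + 1) • |w - f w|) + (|w - x| + (n + 1) • |x - f x|) ≤
      (n + 1) • |x - f x| + (n + 1) • |w - f w| :=
    le_trans (add_le_add (add_le_add le_rfl (R_le_KR f n w))
      (add_le_add le_rfl (R_le_KR f n x))) h3
  have h5 : (|x - w| + |w - x|) + ((n + 1) • |x - f x| + (n + 1) • |w - f w|) ≤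
      (n + 1) • |x - f x| + (n + 1) • |w - f w| := by
    calc (|x - w| + |w - x|) + ((n + 1) • |x - f x| + (n + 1) • |w - f w|)
        = (|x - w| + (n + 1) • |w - f w|) + (|w - x| + (n + 1) • |x - f x|) := by abel
      _ ≤ _ := h4
  have h6 : |x - w| + |w - x| ≤ 0 := add_le_iff_nonpos_left.mp h5
  have h7 : |x - w| ≤ 0 := (le_add_of_nonneg_right (abs_nonneg _)).trans h6
  have h8 : x - w = 0 := abs_nonpos_iff.mp h7
  exact (sub_eq_zero.mp h8).symm

private lemma ball_mono {x y : G} (h : LeR f n y x) :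
    {u : G | |y - u| ≤ (n + 1) • |y - f y|} ⊆ {u : G | |x - u| ≤ (n + 1) • |x - f x|} := by
  rcases h with rfl | h
  · exact subset_rfl
  intro u hu
  simp only [Set.mem_setOf_eq] at hu ⊢
  calc |x - u| ≤ |x - y| + |y - u| := abs_sub_le _ _ _
    _ ≤ |x - y| + (n + 1) • |y - f y| := add_le_add le_rfl hu
    _ ≤ |x - y| + (2 * n + 2) • ((n + 1) • |y - f y|) := add_le_add le_rfl (R_le_KR f n y)
    _ ≤ (n + 1) • |x - f x| := h

private lemma build' (hk0 : n - m ≠ 0) {w x : G}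
    (h : (n - m) • |x - w| + ((n - m) * ((2 * n + 2) * (n + 1))) • |w - f w| ≤
      ((n - m) * (n + 1)) • |x - f x|) :
    le'' f n w x := by
  refine le_of_nsmul_le_nsmul_right hk0 ?_
  calc (n - m) • (|x - w| + (2 * n + 2) • ((n + 1) • |w - f w|))
      = (n - m) • |x - w| + ((n - m) * ((2 * n + 2) * (n + 1))) • |w - f w| := by
        rw [smul_add]; congr 1; rw [smul_smul, smul_smul, mul_assoc]
    _ ≤ ((n - m) * (n + 1)) • |x - f x| := h
    _ = (n - m) • ((n + 1) • |x - f x|) := (smul_smul _ _ _).symm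

private lemma core' (hm : 0 < m) (hmn : m < n)
    (hso : ∀ x, n • |f x - f (f x)| ≤ m • |x - f x|) (Bc : ℕ) (hB2 : 2 ≤ Bc) (z : G) :
    ∃ w : G, (n - m) • |z - w| ≤ n • |z - f z| ∧ Bc • |w - f w| ≤ |z - f z| ∧
      (w = z → f z = z) := by
  obtain ⟨j, hj1, hsm⟩ := small' hm hmn hso Bc z
  refine ⟨f^[j] z, orbit' hmn hso j z, hsm, ?_⟩
  intro hwz
  rw [hwz] at hsm
  have h2 : |z - f z| + |z - f z| ≤ |z - f z| := by
    have h1 : (2 : ℕ) • |z - f z| ≤ Bc • |z - f z| :=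
      nsmul_le_nsmul_left (abs_nonneg _) hB2
    have := h1.trans hsm
    rwa [two_nsmul] at this
  have h3 : |z - f z| ≤ 0 := add_le_iff_nonpos_left.mp h2
  have h4 : z - f z = 0 := abs_nonpos_iff.mp h3
  exact (sub_eq_zero.mp h4).symm

private lemma twoleBc {m n : ℕ} (hmn : m < n) :
    2 ≤ (n - m) * ((2 * n + 2) * (n + 1)) * (2 * n + 3) := by
  have hC1 : 1 ≤ n - m := by omega
  calc 2 = 1 * (2 * 1) * 1 := by ring
    _ ≤ (n - m) * ((2 * n + 2) * (n + 1)) * (2 * n + 3) :=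
      Nat.mul_le_mul (Nat.mul_le_mul hC1
        (Nat.mul_le_mul (by omega) (by omega))) (by omega)

private lemma coefle {m n : ℕ} (hmn : m < n) :
    (n - m) * (n + 1) + (n * (2 * n + 3) + 1) ≤ (n - m) * ((2 * n + 2) * (n + 1)) := by
  have hC1 : 1 ≤ n - m := by omega
  have h6 : n * (2 * n + 3) + 1 ≤ (n - m) * ((2 * n + 1) * (n + 1)) := by
    calc n * (2 * n + 3) + 1 = 1 * ((2 * n + 1) * (n + 1)) := by ring
      _ ≤ (n - m) * ((2 * n + 1) * (n + 1)) := Nat.mul_le_mul_right _ hC1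
  calc (n - m) * (n + 1) + (n * (2 * n + 3) + 1)
      ≤ (n - m) * (n + 1) + (n - m) * ((2 * n + 1) * (n + 1)) := Nat.add_le_add_left h6 _
    _ = (n - m) * ((2 * n + 2) * (n + 1)) := by rw [← Nat.mul_add]; congr 1; ring

private lemma final' (hm : 0 < m) (hmn : m < n)
    (hso : ∀ x, n • |f x - f (f x)| ≤ m • |x - f x|) {x : G} (hfx : f x ≠ x) :
    ∃ w, w ≠ x ∧ le'' f n w x := by
  have hk0 : n - m ≠ 0 := by omega
  have hC1 : 1 ≤ n - m := by omega
  obtain ⟨w, ho, hs, he⟩ :=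
    core' hm hmn hso ((n - m) * ((2 * n + 2) * (n + 1)) * (2 * n + 3)) (twoleBc hmn) x
  refine ⟨w, fun h => hfx (he h), ?_⟩
  apply build' hk0
  have hcoef : (n - m) * ((2 * n + 2) * (n + 1)) ≤
      (n - m) * ((2 * n + 2) * (n + 1)) * (2 * n + 3) := by
    calc (n - m) * ((2 * n + 2) * (n + 1))
        = (n - m) * ((2 * n + 2) * (n + 1)) * 1 := by ring
      _ ≤ (n - m) * ((2 * n + 2) * (n + 1)) * (2 * n + 3) :=
        Nat.mul_le_mul_left _ (by omega)
  have h1 : ((n - m) * ((2 * n + 2) * (n + 1))) • |w - f w| ≤ |x - f x| :=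
    (nsmul_le_nsmul_left (abs_nonneg _) hcoef).trans hs
  calc (n - m) • |x - w| + ((n - m) * ((2 * n + 2) * (n + 1))) • |w - f w|
      ≤ n • |x - f x| + |x - f x| := add_le_add ho h1
    _ = (n + 1) • |x - f x| := (succ_nsmul _ n).symm
    _ ≤ ((n - m) * (n + 1)) • |x - f x| := nsmul_le_nsmul_left (abs_nonneg _) (by
        calc n + 1 = 1 * (n + 1) := by ring
          _ ≤ (n - m) * (n + 1) := Nat.mul_le_mul_right _ hC1)

end Stmt16Aux

theorem stmt_16 {G : Type*} [AddCommGroup G] [LinearOrder G] [IsOrderedAddMonoid G]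
    (hsph : ∀ 𝓝 : Set (Set G), 𝓝.Nonempty →
      (∀ C ∈ 𝓝, ∃ g r : G, 0 ≤ r ∧ C = {z | |g - z| ≤ r}) →
      IsChain (· ⊆ ·) 𝓝 → (⋂₀ 𝓝).Nonempty)
    (f : G → G)
    (hc : ∀ x y, |f x - f y| ≤ |x - y|)
    (m n : ℕ) (hm : 0 < m) (hmn : m < n)
    (hso : ∀ x, n • |f x - f (f x)| ≤ m • |x - f x|) :
    ∃ x, f x = x := by
  classical
  have hk0 : n - m ≠ 0 := by omega
  have bound : ∀ c : Set G, IsChain (fun a b : G => LeR f n b a) c →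
      ∃ ub, ∀ a ∈ c, LeR f n ub a := by
    intro c hchain
    rcases c.eq_empty_or_nonempty with hce | hcn
    · exact ⟨0, by simp [hce]⟩
    by_cases hmin : ∃ x₀ ∈ c, ∀ a ∈ c, LeR f n x₀ a
    · obtain ⟨x₀, _, h⟩ := hmin; exact ⟨x₀, h⟩
    push_neg at hmin
    have hstrict : ∀ x ∈ c, ∃ y ∈ c, le'' f n y x := by
      intro x hx
      obtain ⟨a, ha, hna⟩ := hmin x hx
      have hne : a ≠ x := fun h => hna (Or.inl h.symm)
      rcases hchain hx ha (Ne.symm hne) with h1 | h2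
      · rcases h1 with he | hl
        · exact absurd he hne
        · exact ⟨a, ha, hl⟩
      · exact absurd h2 hna
    have hz : ∃ z : G, ∀ a ∈ c, |a - z| ≤ (n + 1) • |a - f a| := by
      have hballs : ∀ C ∈ (fun a => {u : G | |a - u| ≤ (n + 1) • |a - f a|}) '' c,
          ∃ g r : G, 0 ≤ r ∧ C = {u | |g - u| ≤ r} := by
        rintro C ⟨a, _, rfl⟩
        exact ⟨a, (n + 1) • |a - f a|, nsmul_nonneg (abs_nonneg _) _, rfl⟩
      have hchain2 : IsChain (· ⊆ ·)
          ((fun a => {u : G | |a - u| ≤ (n + 1) • |a - f a|}) '' c) := by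
        rintro _ ⟨a, ha, rfl⟩ _ ⟨b, hb, rfl⟩ hne
        have hab : a ≠ b := fun h => hne (by rw [h])
        rcases hchain ha hb hab with h1 | h2
        · exact Or.inr (ball_mono h1)
        · exact Or.inl (ball_mono h2)
      obtain ⟨z, hz⟩ := hsph _ (hcn.image _) hballs hchain2
      exact ⟨z, fun a ha => hz _ (Set.mem_image_of_mem _ ha)⟩
    obtain ⟨z, hz⟩ := hz
    obtain ⟨w, how, hsw, _⟩ :=
      core' hm hmn hso ((n - m) * ((2 * n + 2) * (n + 1)) * (2 * n + 3)) (twoleBc hmn) z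
    refine ⟨w, fun a ha => Or.inr ?_⟩
    obtain ⟨y, hy, hya⟩ := hstrict a ha
    have hzy := hz y hy
    apply build' hk0
    have t1 : |z - y| ≤ (n + 1) • |y - f y| := by rw [abs_sub_comm]; exact hzy
    have t2 : |f y - f z| ≤ (n + 1) • |y - f y| := (hc y z).trans hzy
    have hdz : |z - f z| ≤ (2 * n + 3) • |y - f y| := by
      calc |z - f z| ≤ |z - y| + |y - f z| := abs_sub_le _ _ _
        _ ≤ |z - y| + (|y - f y| + |f y - f z|) := add_le_add le_rfl (abs_sub_le _ _ _)
        _ ≤ (n + 1) • |y - f y| + (|y - f y| + (n + 1) • |y - f y|) :=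
            add_le_add t1 (add_le_add le_rfl t2)
        _ = ((n + 1) + (1 + (n + 1))) • |y - f y| := by module
        _ = (2 * n + 3) • |y - f y| := by congr 1; omega
    have h2 : (n - m) • |z - w| ≤ (n * (2 * n + 3)) • |y - f y| := by
      calc (n - m) • |z - w| ≤ n • |z - f z| := how
        _ ≤ n • ((2 * n + 3) • |y - f y|) := nsmul_le_nsmul_right hdz n
        _ = (n * (2 * n + 3)) • |y - f y| := smul_smul _ _ _
    have h3 : ((n - m) * ((2 * n + 2) * (n + 1))) • |w - f w| ≤ |y - f y| := by
      refine le_of_nsmul_le_nsmul_right (show (2 * n + 3) ≠ 0 by omega) ?_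
      calc (2 * n + 3) • (((n - m) * ((2 * n + 2) * (n + 1))) • |w - f w|)
          = ((n - m) * ((2 * n + 2) * (n + 1)) * (2 * n + 3)) • |w - f w| := by
            rw [smul_smul]; congr 1; ring
        _ ≤ |z - f z| := hsw
        _ ≤ (2 * n + 3) • |y - f y| := hdz
    have h4 : (n - m) • |a - y| + ((n - m) * ((2 * n + 2) * (n + 1))) • |y - f y| ≤
        ((n - m) * (n + 1)) • |a - f a| := by
      have h4' := nsmul_le_nsmul_right hya (n - m)
      calc (n - m) • |a - y| + ((n - m) * ((2 * n + 2) * (n + 1))) • |y - f y|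
          = (n - m) • (|a - y| + (2 * n + 2) • ((n + 1) • |y - f y|)) := by
            rw [smul_add]; congr 1; rw [smul_smul, smul_smul, mul_assoc]
        _ ≤ (n - m) • ((n + 1) • |a - f a|) := h4'
        _ = ((n - m) * (n + 1)) • |a - f a| := smul_smul _ _ _
    have h5 : (n - m) • |a - w| ≤
        (n - m) • |a - y| + ((n - m) * (n + 1)) • |y - f y| + (n * (2 * n + 3)) • |y - f y| := by
      calc (n - m) • |a - w|
          ≤ (n - m) • (|a - y| + (|y - z| + |z - w|)) := nsmul_le_nsmul_right (by
            calc |a - w| ≤ |a - y| + |y - w| := abs_sub_le _ _ _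
              _ ≤ |a - y| + (|y - z| + |z - w|) := add_le_add le_rfl (abs_sub_le _ _ _)) _
        _ = (n - m) • |a - y| + ((n - m) • |y - z| + (n - m) • |z - w|) := by
            rw [smul_add, smul_add]
        _ ≤ (n - m) • |a - y| +
            (((n - m) * (n + 1)) • |y - f y| + (n * (2 * n + 3)) • |y - f y|) := by
            refine add_le_add le_rfl (add_le_add ?_ h2)
            calc (n - m) • |y - z| ≤ (n - m) • ((n + 1) • |y - f y|) :=
                nsmul_le_nsmul_right hzy _
              _ = ((n - m) * (n + 1)) • |y - f y| := smul_smul _ _ _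
        _ = _ := (add_assoc _ _ _).symm
    calc (n - m) • |a - w| + ((n - m) * ((2 * n + 2) * (n + 1))) • |w - f w|
        ≤ ((n - m) • |a - y| + ((n - m) * (n + 1)) • |y - f y| +
            (n * (2 * n + 3)) • |y - f y|) + |y - f y| := add_le_add h5 h3
      _ = (n - m) • |a - y| + ((n - m) * (n + 1) + (n * (2 * n + 3) + 1)) • |y - f y| := by
          rw [add_nsmul, add_nsmul, one_nsmul]; abel
      _ ≤ (n - m) • |a - y| + ((n - m) * ((2 * n + 2) * (n + 1))) • |y - f y| :=
          add_le_add le_rfl (nsmul_le_nsmul_left (abs_nonneg _) (coefle hmn))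
      _ ≤ ((n - m) * (n + 1)) • |a - f a| := h4
  obtain ⟨M, hM⟩ := exists_maximal_of_chains_bounded bound
    (fun {a b c} h1 h2 => LeR_trans h2 h1)
  refine ⟨M, ?_⟩
  by_contra hfx
  obtain ⟨w, hwne, hw⟩ := final' hm hmn hso hfx
  have h1 := hM w (Or.inr hw)
  rcases h1 with he | hl
  · exact hwne he.symm
  · exact hwne (le''_antisymm hw hl)
end

section
/- Let (G, <, +) be a linearly ordered abelian group whose order ball space is spherically complete, i.e., every nonempty chain (under inclusion) of order balls B_o(g; r) = {z ∈ G : |g − z| ≤ r} (g ∈ G, 0 ≤ r ∈ G) has nonempty intersection. Then the ultrametric ball space of the natural valuation of G is spherically complete: every nonempty chain (under inclusion) of sets of the form B_u(x, y) = {z ∈ G : ∃ n ∈ ℕ, |x − z| ≤ n·|x − y|} (x, y ∈ G) has nonempty intersection. -/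
theorem stmt_17 {G : Type*} [AddCommGroup G] [LinearOrder G] [IsOrderedAddMonoid G]
    (hsph : ∀ 𝓝 : Set (Set G), 𝓝.Nonempty →
      (∀ C ∈ 𝓝, ∃ g r : G, 0 ≤ r ∧ C = {z | |g - z| ≤ r}) →
      IsChain (· ⊆ ·) 𝓝 → (⋂₀ 𝓝).Nonempty) :
    ∀ 𝓝 : Set (Set G), 𝓝.Nonempty →
      (∀ C ∈ 𝓝, ∃ x y : G, C = {z | ∃ n : ℕ, |x - z| ≤ n • |x - y|}) →
      IsChain (· ⊆ ·) 𝓝 → (⋂₀ 𝓝).Nonempty := by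
  intro 𝓝 hne hrep hchain
  choose! x y hxy using hrep
  set r : Set G → G := fun C => |x C - y C| with hrdef
  have hr0 : ∀ C, 0 ≤ r C := fun C => abs_nonneg _
  have hmem_iff : ∀ C ∈ 𝓝, ∀ z : G, z ∈ C ↔ ∃ n : ℕ, |x C - z| ≤ n • r C :=
    fun C hC z => Set.ext_iff.mp (hxy C hC) z
  have hmemx : ∀ C ∈ 𝓝, x C ∈ C := by
    intro C hC
    exact (hmem_iff C hC (x C)).mpr ⟨0, by simp⟩
  have hmemy : ∀ C ∈ 𝓝, y C ∈ C := by
    intro C hC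
    exact (hmem_iff C hC (y C)).mpr ⟨1, by simp [hrdef]⟩
  have key : ∀ C ∈ 𝓝, ∀ a ∈ C, ∀ b ∈ C, ∃ n : ℕ, |a - b| ≤ n • r C := by
    intro C hC a ha b hb
    obtain ⟨n, hn⟩ := (hmem_iff C hC a).mp ha
    obtain ⟨m, hm⟩ := (hmem_iff C hC b).mp hb
    refine ⟨n + m, ?_⟩
    calc |a - b| = |(a - x C) + (x C - b)| := by rw [sub_add_sub_cancel]
      _ ≤ |a - x C| + |x C - b| := abs_add_le _ _
      _ = |x C - a| + |x C - b| := by rw [abs_sub_comm]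
      _ ≤ n • r C + m • r C := add_le_add hn hm
      _ = (n + m) • r C := (add_nsmul _ _ _).symm
  have absorb : ∀ C1 ∈ 𝓝, ∀ C2 ∈ 𝓝, C1 ⊆ C2 → C1 ≠ C2 →
      ∀ n : ℕ, n • r C1 < r C2 := by
    intro C1 h1 C2 h2 hsub hne' n
    by_contra hcon
    push_neg at hcon
    apply hne'
    apply Set.Subset.antisymm hsub
    intro z hz
    obtain ⟨m, hm⟩ := key C2 h2 (x C1) (hsub (hmemx C1 h1)) z hz
    refine (hmem_iff C1 h1 z).mpr ⟨m * n, ?_⟩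
    calc |x C1 - z| ≤ m • r C2 := hm
      _ ≤ m • (n • r C1) := nsmul_le_nsmul_right hcon m
      _ = (m * n) • r C1 := by rw [mul_nsmul']
  by_cases hmin : ∃ B0 ∈ 𝓝, ∀ B ∈ 𝓝, B0 ⊆ B
  · obtain ⟨B0, hB0, hB0min⟩ := hmin
    exact ⟨x B0, Set.mem_sInter.mpr fun B hB => hB0min B hB (hmemx B0 hB0)⟩
  push_neg at hmin
  have hstep : ∀ B ∈ 𝓝, ∃ B', B' ∈ 𝓝 ∧ B' ⊆ B ∧ B' ≠ B := by
    intro B hB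
    obtain ⟨B', hB', hns⟩ := hmin B hB
    rcases eq_or_ne B' B with rfl | h
    · exact absurd subset_rfl hns
    rcases hchain hB' hB h with hsub | hsub
    · exact ⟨B', hB', hsub, h⟩
    · exact absurd hsub hns
  choose! f hfmem hfsub hfne using hstep
  set O : Set G → Set G := fun C => {z | |x (f C) - z| ≤ r C} with hOdef
  have hOsub : ∀ C ∈ 𝓝, O C ⊆ C := by
    intro C hC z hz
    have hz' : |x (f C) - z| ≤ r C := hz
    obtain ⟨m, hm⟩ := key C hC (x C) (hmemx C hC) (x (f C))
      (hfsub C hC (hmemx (f C) (hfmem C hC)))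
    refine (hmem_iff C hC z).mpr ⟨m + 1, ?_⟩
    calc |x C - z| = |(x C - x (f C)) + (x (f C) - z)| := by rw [sub_add_sub_cancel]
      _ ≤ |x C - x (f C)| + |x (f C) - z| := abs_add_le _ _
      _ ≤ m • r C + r C := add_le_add hm hz'
      _ = (m + 1) • r C := (succ_nsmul _ _).symm
  have hOmono : ∀ C1 ∈ 𝓝, ∀ C2 ∈ 𝓝, C1 ⊆ C2 → O C1 ⊆ O C2 := by
    intro C1 h1 C2 h2 hsub
    rcases eq_or_ne C1 C2 with rfl | hne'
    · exact subset_rfl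
    intro z hz
    have hz' : |x (f C1) - z| ≤ r C1 := hz
    have hD1 : f C1 ∈ 𝓝 := hfmem C1 h1
    have hD2 : f C2 ∈ 𝓝 := hfmem C2 h2
    have hc1C1 : x (f C1) ∈ C1 := hfsub C1 h1 (hmemx _ hD1)
    have hcase : f C2 ⊆ C1 ∨ C1 ⊆ f C2 := by
      rcases eq_or_ne (f C2) C1 with h | h
      · exact Or.inl h.le
      · exact hchain hD2 h1 h
    show |x (f C2) - z| ≤ r C2
    rcases hcase with hA | hB
    · obtain ⟨m, hm⟩ := key C1 h1 (x (f C2)) (hA (hmemx _ hD2)) (x (f C1)) hc1C1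
      calc |x (f C2) - z| = |(x (f C2) - x (f C1)) + (x (f C1) - z)| := by rw [sub_add_sub_cancel]
        _ ≤ |x (f C2) - x (f C1)| + |x (f C1) - z| := abs_add_le _ _
        _ ≤ m • r C1 + r C1 := add_le_add hm hz'
        _ = (m + 1) • r C1 := (succ_nsmul _ _).symm
        _ ≤ r C2 := le_of_lt (absorb C1 h1 C2 h2 hsub hne' (m + 1))
    · have hxC1 : x C1 ∈ f C2 := hB (hmemx C1 h1)
      have hyC1 : y C1 ∈ f C2 := hB (hmemy C1 h1)
      obtain ⟨k, hk⟩ := key (f C2) hD2 (x C1) hxC1 (y C1) hyC1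
      obtain ⟨m, hm⟩ := key (f C2) hD2 (x (f C2)) (hmemx _ hD2) (x (f C1)) (hB hc1C1)
      calc |x (f C2) - z| = |(x (f C2) - x (f C1)) + (x (f C1) - z)| := by rw [sub_add_sub_cancel]
        _ ≤ |x (f C2) - x (f C1)| + |x (f C1) - z| := abs_add_le _ _
        _ ≤ m • r (f C2) + k • r (f C2) := add_le_add hm (le_trans hz' hk)
        _ = (m + k) • r (f C2) := (add_nsmul _ _ _).symm
        _ ≤ r C2 := le_of_lt
            (absorb (f C2) hD2 C2 h2 (hfsub C2 h2) (hfne C2 h2) (m + k))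
  obtain ⟨w, hw⟩ := hsph (O '' 𝓝) (hne.image O)
    (by
      rintro _ ⟨C, hC, rfl⟩
      exact ⟨x (f C), r C, hr0 C, rfl⟩)
    (by
      rintro _ ⟨C1, h1, rfl⟩ _ ⟨C2, h2, rfl⟩ hne'
      rcases eq_or_ne C1 C2 with rfl | h
      · exact absurd rfl hne'
      rcases hchain h1 h2 h with hsub | hsub
      · exact Or.inl (hOmono C1 h1 C2 h2 hsub)
      · exact Or.inr (hOmono C2 h2 C1 h1 hsub))
  exact ⟨w, Set.mem_sInter.mpr fun B hB =>
    hOsub B hB (Set.mem_sInter.mp hw (O B) ⟨B, hB, rfl⟩)⟩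
end

section
/- Let (G, <, +) be a nontrivial archimedean linearly ordered abelian group. Then the order ball space of G is spherically complete (every nonempty chain, under inclusion, of order balls B_o(g; r) = {z ∈ G : |g − z| ≤ r} with g ∈ G, 0 ≤ r ∈ G, has nonempty intersection) if and only if G is isomorphic as an ordered group to the additive ordered group of the integers ℤ or to the additive ordered group of the reals ℝ. -/
open Set

namespace Stmt18Aux

variable {G : Type*} [AddCommGroup G] [LinearOrder G] [IsOrderedAddMonoid G]

/-- Ball inclusion from center/radius data. -/
lemma ball_subset {g g' r r' : G} (h : |g - g'| + r' ≤ r) :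
    {z : G | |g' - z| ≤ r'} ⊆ {z : G | |g - z| ≤ r} := by
  intro z hz
  calc |g - z| ≤ |g - g'| + |g' - z| := abs_sub_le g g' z
    _ ≤ |g - g'| + r' := by exact add_le_add_right hz _
    _ ≤ r := h

section Holder

variable [Archimedean G] (u : G)

/-- Auxiliary set defining the Hölder embedding. -/
def bset (g : G) : Set ℝ :=
  {x | ∃ m n : ℤ, 0 < n ∧ x = (m : ℝ) / n ∧ m • u ≤ n • g}

variable {u}

lemma bset_nonempty (hu : 0 < u) (g : G) : (bset u g).Nonempty := by
  obtain ⟨k, hk⟩ := Archimedean.arch (-g) hu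
  refine ⟨(-(k : ℤ) : ℝ) / 1, -(k : ℤ), 1, one_pos, by push_cast; ring_nf, ?_⟩
  rw [one_zsmul, neg_zsmul]
  rw [← neg_le] at hk
  simpa [natCast_zsmul] using hk.trans_eq (by simp)

lemma bset_bddAbove (hu : 0 < u) (g : G) : BddAbove (bset u g) := by
  obtain ⟨N, hN⟩ := Archimedean.arch g hu
  refine ⟨(N : ℝ), ?_⟩
  rintro x ⟨m, n, hn, rfl, hm⟩
  have h1 : n • g ≤ n • ((N : ℤ) • u) := by
    apply zsmul_le_zsmul_right hn.le
    simpa [natCast_zsmul] using hN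
  rw [← mul_zsmul] at h1
  have h2 : m ≤ n * N := by
    have := hm.trans h1
    exact (zsmul_le_zsmul_iff_left hu).mp this
  rw [div_le_iff₀ (by exact_mod_cast hn)]
  calc ((m : ℝ)) ≤ ((n * N : ℤ) : ℝ) := by exact_mod_cast h2
    _ = (N : ℝ) * n := by push_cast; ring

/-- The Hölder map. -/
noncomputable def hf (u g : G) : ℝ := sSup (bset u g)

lemma le_hf (hu : 0 < u) {g : G} {m n : ℤ} (hn : 0 < n) (h : m • u ≤ n • g) :
    (m : ℝ) / n ≤ hf u g :=
  le_csSup (bset_bddAbove hu g) ⟨m, n, hn, rfl, h⟩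

lemma hf_le (hu : 0 < u) {g : G} {m n : ℤ} (hn : 0 < n) (h : n • g < m • u) :
    hf u g ≤ (m : ℝ) / n := by
  apply csSup_le (bset_nonempty hu g)
  rintro x ⟨m', n', hn', rfl, hm'⟩
  have h1 : (n' * n) • g < (n' * m) • u := by
    rw [mul_zsmul, mul_zsmul]
    exact zsmul_lt_zsmul_right hn' h
  have h2 : (m' * n) • u ≤ (n' * n) • g := by
    rw [mul_comm m' n, mul_comm n' n, mul_zsmul, mul_zsmul]
    exact zsmul_le_zsmul_right hn.le hm'
  have h3 : m' * n < n' * m := by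
    have := h2.trans_lt h1
    exact (zsmul_lt_zsmul_iff_left hu).mp this
  rw [div_le_div_iff₀ (by exact_mod_cast hn') (by exact_mod_cast hn)]
  have h4 : (m' * n : ℤ) ≤ m * n' := by nlinarith [h3.le]
  exact_mod_cast h4

lemma hf_pinch (hu : 0 < u) (g : G) {n : ℤ} (hn : 0 < n) :
    ∃ a : ℤ, a • u ≤ n • g ∧ n • g < (a + 1) • u ∧
      (a : ℝ) / n ≤ hf u g ∧ hf u g ≤ (a + 1 : ℝ) / n := by
  obtain ⟨a, ⟨h1, h2⟩, -⟩ := existsUnique_zsmul_near_of_pos hu (n • g)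
  exact ⟨a, h1, h2, le_hf hu hn h1, by
    have := hf_le hu hn h2
    push_cast at this ⊢
    linarith⟩

lemma hf_add (hu : 0 < u) (g h : G) : hf u (g + h) = hf u g + hf u h := by
  have key : ∀ n : ℕ, 0 < n → |hf u (g + h) - (hf u g + hf u h)| ≤ 2 / n := by
    intro n hn
    have hn' : (0 : ℤ) < (n : ℤ) := by exact_mod_cast hn
    obtain ⟨a, ha1, ha2, ha3, ha4⟩ := hf_pinch hu g hn'
    obtain ⟨b, hb1, hb2, hb3, hb4⟩ := hf_pinch hu h hn'
    have hgh1 : (a + b) • u ≤ (n : ℤ) • (g + h) := by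
      rw [add_zsmul, smul_add]
      exact add_le_add ha1 hb1
    have hgh2 : (n : ℤ) • (g + h) < (a + b + 2) • u := by
      have : (a + b + 2) • u = (a + 1) • u + (b + 1) • u := by
        rw [← add_zsmul]; ring_nf
      rw [this, smul_add]
      exact add_lt_add ha2 hb2
    have l1 : ((a : ℝ) + b) / n ≤ hf u (g + h) := by
      have := le_hf hu hn' hgh1; push_cast at this ⊢; linarith
    have l2 : hf u (g + h) ≤ ((a : ℝ) + b + 2) / n := by
      have := hf_le hu hn' hgh2; push_cast at this ⊢; linarith
    have hnR : (0 : ℝ) < n := by exact_mod_cast hn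
    rw [abs_le]
    constructor
    · have : hf u g + hf u h ≤ ((a : ℝ) + 1) / n + ((b : ℝ) + 1) / n := add_le_add ha4 hb4
      rw [← add_div] at this
      rw [neg_le, neg_sub]
      calc hf u g + hf u h - hf u (g + h) ≤ ((a : ℝ) + 1 + (b + 1)) / n - ((a : ℝ) + b) / n := by
            apply sub_le_sub this l1
        _ = 2 / n := by field_simp; ring
    · have : (a : ℝ) / n + (b : ℝ) / n ≤ hf u g + hf u h := add_le_add ha3 hb3
      rw [← add_div] at this
      calc hf u (g + h) - (hf u g + hf u h) ≤ ((a : ℝ) + b + 2) / n - ((a : ℝ) + b) / n := by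
            apply sub_le_sub l2 this
        _ = 2 / n := by field_simp; ring
  by_contra hne
  have habs : 0 < |hf u (g + h) - (hf u g + hf u h)| := by
    rw [abs_pos]; intro h0; apply hne; linarith [sub_eq_zero.mp h0]
  obtain ⟨n, hnlt⟩ := exists_nat_gt (2 / |hf u (g + h) - (hf u g + hf u h)|)
  have hn0 : 0 < n := by
    by_contra hn0
    push_neg at hn0
    interval_cases n
    simp at hnlt
    linarith [div_pos (by norm_num : (0:ℝ) < 2) habs]
  have := key n hn0
  rw [div_lt_iff₀ habs] at hnlt
  have hnR : (0 : ℝ) < n := by exact_mod_cast hn0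
  rw [le_div_iff₀ hnR] at this
  nlinarith

lemma hf_pos (hu : 0 < u) {g : G} (hg : 0 < g) : 0 < hf u g := by
  obtain ⟨k, hk⟩ := Archimedean.arch u hg
  have hk0 : 0 < k := by
    rcases Nat.eq_zero_or_pos k with rfl | h
    · simp at hk; exact absurd hk (not_le.mpr hu)
    · exact h
  have : (1 : ℤ) • u ≤ (k : ℤ) • g := by
    rw [one_zsmul]; simpa [natCast_zsmul] using hk
  have h1 := le_hf hu (by exact_mod_cast hk0) this
  have : (0 : ℝ) < (1 : ℝ) / ((k : ℤ) : ℝ) := by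
    apply div_pos one_pos; exact_mod_cast hk0
  linarith

lemma hf_zero (hu : 0 < u) : hf u 0 = 0 := by
  have := hf_add hu 0 0
  simp at this
  linarith

lemma hf_strictMono (hu : 0 < u) : StrictMono (hf u) := by
  intro a b hab
  have h1 : hf u b = hf u a + hf u (b - a) := by
    rw [← hf_add hu]; congr 1; abel
  have h2 : 0 < hf u (b - a) := hf_pos hu (sub_pos.mpr hab)
  linarith

lemma hf_abs (hu : 0 < u) (g : G) : hf u |g| = |hf u g| := by
  rcases abs_cases g with ⟨h1, h2⟩ | ⟨h1, h2⟩
  · rw [h1, abs_of_nonneg]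
    rcases eq_or_lt_of_le h2 with h | h
    · rw [← h, hf_zero hu]
    · exact (hf_pos hu h).le
  · rw [h1]
    have : hf u (-g) = -hf u g := by
      have := hf_add hu g (-g)
      simp [hf_zero hu] at this
      linarith
    rw [this, abs_of_nonpos]
    have : hf u g < hf u 0 := hf_strictMono hu h2
    rw [hf_zero hu] at this
    exact this.le

end Holder

/-- Order isos map abs to abs. -/
lemma iso_abs {H : Type*} [AddCommGroup H] [LinearOrder H] [IsOrderedAddMonoid H] (e : G ≃+o H) (a : G) :
    e |a| = |e a| := by
  have hmono : ∀ x y : G, x ≤ y → e x ≤ e y := fun x y h => by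
    exact (map_le_map_iff e).mpr h
  rcases abs_cases a with ⟨h1, h2⟩ | ⟨h1, h2⟩
  · rw [h1, abs_of_nonneg]
    have := hmono 0 a h2
    simpa using this
  · rw [h1, map_neg, abs_of_nonpos]
    have := hmono a 0 h2.le
    simpa using this

end Stmt18Aux

open Stmt18Aux

theorem stmt_18 {G : Type*} [AddCommGroup G] [LinearOrder G] [IsOrderedAddMonoid G] [Nontrivial G] [Archimedean G] :
    (∀ 𝓝 : Set (Set G), 𝓝.Nonempty →
      (∀ C ∈ 𝓝, ∃ g r : G, 0 ≤ r ∧ C = {z | |g - z| ≤ r}) →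
      IsChain (· ⊆ ·) 𝓝 → (⋂₀ 𝓝).Nonempty) ↔
    (Nonempty (G ≃+o ℤ) ∨ Nonempty (G ≃+o ℝ)) := by
  constructor
  · intro hsc
    rcases LinearOrderedAddCommGroup.discrete_or_denselyOrdered G with h | hdense
    · exact Or.inl h
    · -- dense case: build iso with ℝ
      right
      obtain ⟨u0, hu0⟩ := exists_ne (0 : G)
      set u := |u0| with hu_def
      have hu : 0 < u := abs_pos.mpr hu0
      set φ : G → ℝ := hf u with hφ
      have hadd : ∀ g h : G, φ (g + h) = φ g + φ h := hf_add hu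
      have hmono : StrictMono φ := hf_strictMono hu
      have hzero : φ 0 = 0 := hf_zero hu
      have habs : ∀ g, φ |g| = |φ g| := hf_abs hu
      have hsub : ∀ g h : G, φ (g - h) = φ g - φ h := by
        intro g h
        have := hadd (g - h) h
        simp at this
        linarith
      -- small positive values in the range
      have hsmall : ∀ ε : ℝ, 0 < ε → ∃ s : G, 0 < φ s ∧ φ s < ε := by
        intro ε hε
        have key : ∀ n : ℕ, ∃ s : G, 0 < s ∧ φ s ≤ φ u / 2 ^ n := by
          intro n
          induction n with
          | zero => exact ⟨u, hu, by simp⟩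
          | succ n ih =>
            obtain ⟨s, hs, hsle⟩ := ih
            obtain ⟨s', hs1, hs2⟩ := exists_between hs
            rcases le_or_gt (φ s') (φ s / 2) with h | h
            · exact ⟨s', hs1, by rw [pow_succ, ← div_div]; linarith⟩
            · refine ⟨s - s', sub_pos.mpr hs2, ?_⟩
              rw [hsub s s', pow_succ, ← div_div]
              linarith
        obtain ⟨n, hn⟩ := pow_unbounded_of_one_lt (φ u / ε) (by norm_num : (1:ℝ) < 2)
        obtain ⟨s, hs, hsle⟩ := key n
        refine ⟨s, ?_, ?_⟩
        · rw [← hzero]; exact hmono hs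
        · have h2 : (0:ℝ) < 2 ^ n := by positivity
          rw [div_lt_iff₀ hε] at hn
          calc φ s ≤ φ u / 2 ^ n := hsle
            _ < ε := by rw [div_lt_iff₀ h2]; linarith
      -- density of range
      have hdense_range : ∀ x : ℝ, ∀ ε : ℝ, 0 < ε → ∃ g : G, |φ g - x| < ε := by
        intro x ε hε
        obtain ⟨s, hs1, hs2⟩ := hsmall ε hε
        obtain ⟨m, ⟨hm1, hm2⟩, -⟩ := existsUnique_zsmul_near_of_pos hs1 x
        refine ⟨m • s, ?_⟩
        have : φ (m • s) = m • φ s := by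
          have : ∀ k : ℕ, φ (k • s) = k • φ s := by
            intro k
            induction k with
            | zero => simpa using hzero
            | succ k ih => rw [succ_nsmul, succ_nsmul, hadd, ih]
          rcases Int.eq_nat_or_neg m with ⟨k, rfl | rfl⟩
          · rw [natCast_zsmul, natCast_zsmul, this]
          · rw [neg_zsmul, neg_zsmul, natCast_zsmul, natCast_zsmul]
            have h2 := hadd (k • s) (-(k • s))
            simp [hzero] at h2
            rw [this] at h2
            linarith
        rw [this, abs_lt]
        have h3 : (m + 1) • φ s = m • φ s + φ s := by rw [add_zsmul, one_zsmul]
        rw [h3] at hm2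
        constructor <;> linarith
      -- surjectivity via spherical completeness
      have hsurj : Function.Surjective φ := by
        intro x
        have hq : ∀ n : ℕ, (0:ℝ) < (1/4) ^ n := fun n => by positivity
        choose g hg using fun n : ℕ => hdense_range x ((1/4)^n / 4) (by positivity)
        choose r hr using fun n : ℕ =>
          hdense_range ((1/4)^n * 5 / 8) ((1/4)^n / 8) (by positivity)
        have hrlb : ∀ n, (1/4:ℝ)^n / 2 < φ (r n) := by
          intro n; have := abs_lt.mp (hr n); linarith [this.1]
        have hrub : ∀ n, φ (r n) < (1/4:ℝ)^n * 3 / 4 := by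
          intro n; have := abs_lt.mp (hr n); linarith [this.2]
        have hrpos : ∀ n, 0 < r n := by
          intro n
          have : φ 0 < φ (r n) := by rw [hzero]; linarith [hrlb n, hq n]
          exact hmono.lt_iff_lt.mp this
        set C : ℕ → Set G := fun n => {z | |g n - z| ≤ r n} with hC
        have hnest : ∀ n, C (n + 1) ⊆ C n := by
          intro n
          apply ball_subset
          have key : φ (|g n - g (n+1)| + r (n+1)) ≤ φ (r n) := by
            rw [hadd, habs, hsub]
            have h1 := abs_lt.mp (hg n)
            have h2 := abs_lt.mp (hg (n+1))
            have h4 : (1/4:ℝ)^(n+1) = (1/4)^n * (1/4) := pow_succ _ _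
            have h5 := hrub (n+1)
            have h6 := hrlb n
            have h7 : |φ (g n) - φ (g (n+1))| < (1/4:ℝ)^n/4 + (1/4)^(n+1)/4 := by
              rw [abs_lt]
              constructor <;> [linarith [h1.1, h2.2]; linarith [h1.2, h2.1]]
            nlinarith [hq n]
          exact hmono.le_iff_le.mp key
        have hmono_nest : ∀ m n : ℕ, m ≤ n → C n ⊆ C m := by
          intro m n hmn
          induction n, hmn using Nat.le_induction with
          | base => exact subset_rfl
          | succ n hmn ih => exact (hnest n).trans ih
        obtain ⟨z, hz⟩ := hsc (range C) (range_nonempty C)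
          (by rintro _ ⟨n, rfl⟩; exact ⟨g n, r n, (hrpos n).le, rfl⟩)
          (by
            rintro _ ⟨m, rfl⟩ _ ⟨n, rfl⟩ _
            rcases le_total m n with h | h
            · exact Or.inr (hmono_nest m n h)
            · exact Or.inl (hmono_nest n m h))
        refine ⟨z, ?_⟩
        have hzn : ∀ n : ℕ, |φ (g n) - φ z| ≤ φ (r n) := by
          intro n
          have hzc : z ∈ C n := hz _ ⟨n, rfl⟩
          have : φ (|g n - z|) ≤ φ (r n) := hmono.monotone hzc
          rwa [habs, hsub] at this
        have hfinal : ∀ n : ℕ, |φ z - x| ≤ 2 * (1/4)^n := by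
          intro n
          have h1 := hzn n
          have h2 := abs_lt.mp (hg n)
          have h3 := hrub n
          have h4 := abs_le.mp (le_refl |φ (g n) - φ z|)
          have h5 := abs_le.mp h1
          rw [abs_le]
          constructor <;> [linarith [h5.1]; linarith [h5.2]]
        by_contra hne
        have habs0 : 0 < |φ z - x| := by
          rw [abs_pos]; intro h0; exact hne (by linarith [sub_eq_zero.mp h0])
        obtain ⟨n, hn⟩ := exists_pow_lt_of_lt_one (by linarith : (0:ℝ) < |φ z - x| / 2)
          (by norm_num : (1/4 : ℝ) < 1)
        have := hfinal n
        linarith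
      -- build the iso
      have hbij : Function.Bijective φ := ⟨hmono.injective, hsurj⟩
      refine ⟨⟨AddEquiv.mk' (Equiv.ofBijective φ hbij) hadd, ?_⟩⟩
      intro a b
      exact hmono.le_iff_le
  · rintro (he | he) <;> intro 𝓝 hne hballs hchain <;> obtain ⟨e⟩ := he
    · -- ℤ case: pick ball of minimal radius
      obtain ⟨C₁, hC₁⟩ := hne
      obtain ⟨g₁, r₁, hr₁, hCb₁⟩ := hballs C₁ hC₁
      set T : ℤ → Prop := fun k =>
        ∃ C ∈ 𝓝, ∃ g r : G, 0 ≤ r ∧ C = {z | |g - z| ≤ r} ∧ e r = k with hT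
      have hbdd : ∃ b : ℤ, ∀ z : ℤ, T z → b ≤ z := by
        refine ⟨0, ?_⟩
        rintro k ⟨C, hC, g, r, hr, hCb, rfl⟩
        have : e 0 ≤ e r := (map_le_map_iff e).mpr hr
        simpa using this
      have hinh : ∃ z : ℤ, T z := ⟨e r₁, C₁, hC₁, g₁, r₁, hr₁, hCb₁, rfl⟩
      obtain ⟨k₀, ⟨C₀, hC₀, g₀, r₀, hr₀, hCb₀, hk₀⟩, hleast⟩ := Int.exists_least_of_bdd hbdd hinh
      refine ⟨g₀, ?_⟩
      rintro C hC
      have hg₀C₀ : g₀ ∈ C₀ := by rw [hCb₀]; simpa using hr₀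
      rcases eq_or_ne C C₀ with rfl | hCne
      · exact hg₀C₀
      rcases hchain hC hC₀ hCne with hsub | hsup
      · -- C ⊆ C₀ : show C has the same center
        obtain ⟨g, r, hr, hCb⟩ := hballs C hC
        have hrr₀ : r₀ ≤ r := by
          have : k₀ ≤ e r := hleast _ ⟨C, hC, g, r, hr, hCb, rfl⟩
          rw [← hk₀] at this
          exact (map_le_map_iff e).mp this
        have hmem1 : g - r ∈ C := by
          rw [hCb]
          show |g - (g - r)| ≤ r
          rw [sub_sub_cancel, abs_of_nonneg hr]
        have hmem2 : g + r ∈ C := by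
          rw [hCb]
          show |g - (g + r)| ≤ r
          rw [sub_add_cancel_left, abs_neg, abs_of_nonneg hr]
        have h1 : |g₀ - (g - r)| ≤ r₀ := by have := hsub hmem1; rwa [hCb₀] at this
        have h2 : |g₀ - (g + r)| ≤ r₀ := by have := hsub hmem2; rwa [hCb₀] at this
        rw [abs_le] at h1 h2
        have a1 : g₀ - r₀ ≤ g - r := sub_le_comm.mp h1.2
        have a2 : g + r ≤ g₀ + r₀ := by
          have h2l := h2.1
          rw [neg_le, neg_sub] at h2l
          exact sub_le_iff_le_add'.mp h2l
        have hgg : g = g₀ := by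
          have b1 : g ≤ g₀ := by
            have : g + r₀ ≤ g₀ + r₀ := le_trans (add_le_add_right hrr₀ g) a2
            exact le_of_add_le_add_right this
          have b2 : g₀ ≤ g := by
            have : g₀ - r₀ ≤ g - r₀ := a1.trans (sub_le_sub_left hrr₀ g)
            exact sub_le_sub_iff_right r₀ |>.mp this
          exact le_antisymm b1 b2
        rw [hCb, hgg]
        simpa using hr
      · exact hsup hg₀C₀
    · -- ℝ case: compactness
      have hne' : Nonempty 𝓝 := hne.to_subtype
      set t : 𝓝 → Set ℝ := fun C => e '' (C : Set G) with ht
      have himg : ∀ (g r : G), e '' {z | |g - z| ≤ r} = Icc (e g - e r) (e g + e r) := by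
        intro g r
        ext y
        simp only [mem_image, mem_Icc, mem_setOf_eq]
        constructor
        · rintro ⟨z, hz, rfl⟩
          have : e |g - z| ≤ e r := (map_le_map_iff e).mpr hz
          rw [iso_abs, map_sub] at this
          rw [abs_le] at this
          constructor <;> linarith [this.1, this.2]
        · intro ⟨h1, h2⟩
          refine ⟨e.symm y, ?_, by simp⟩
          have : |e g - y| ≤ e r := by rw [abs_le]; constructor <;> linarith
          have h3 : e |g - e.symm y| ≤ e r := by
            rw [iso_abs, map_sub]
            simpa using this
          exact (map_le_map_iff e).mp h3
      have hIcc : ∀ C : 𝓝, ∃ a b : ℝ, a ≤ b ∧ t C = Icc a b := by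
        rintro ⟨C, hC⟩
        obtain ⟨g, r, hr, hCb⟩ := hballs C hC
        refine ⟨e g - e r, e g + e r, ?_, by rw [ht]; simp only; rw [hCb, himg]⟩
        have : (0:ℝ) ≤ e r := by
          have := (map_le_map_iff e).mpr hr
          simpa using this
        linarith
      have hnonempty : ∀ C : 𝓝, (t C).Nonempty := by
        intro C; obtain ⟨a, b, hab, habeq⟩ := hIcc C
        rw [habeq]; exact nonempty_Icc.mpr hab
      have hcomp : ∀ C : 𝓝, IsCompact (t C) := by
        intro C; obtain ⟨a, b, _, habeq⟩ := hIcc C; rw [habeq]; exact isCompact_Icc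
      have hclosed : ∀ C : 𝓝, IsClosed (t C) := by
        intro C; obtain ⟨a, b, _, habeq⟩ := hIcc C; rw [habeq]; exact isClosed_Icc
      have hdir : Directed (· ⊇ ·) t := by
        rintro ⟨C, hC⟩ ⟨D, hD⟩
        rcases eq_or_ne C D with rfl | hCD
        · exact ⟨⟨C, hC⟩, subset_rfl, subset_rfl⟩
        rcases hchain hC hD hCD with h | h
        · exact ⟨⟨C, hC⟩, subset_rfl, image_mono h⟩
        · exact ⟨⟨D, hD⟩, image_mono h, subset_rfl⟩
      obtain ⟨x, hx⟩ := IsCompact.nonempty_iInter_of_directed_nonempty_isCompact_isClosed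
        t hdir hnonempty hcomp hclosed
      refine ⟨e.symm x, ?_⟩
      rintro C hC
      have hx' : x ∈ t ⟨C, hC⟩ := mem_iInter.mp hx ⟨C, hC⟩
      obtain ⟨z, hz, hez⟩ := hx'
      have : e.symm x = z := by rw [← hez]; simp
      rwa [this]
end

section
/- Let (K, <) be a linearly ordered field. Then K is spherically complete with respect to the rational order balls — i.e., every nonempty chain (under inclusion) of sets of the form B_o(q; r) = {x ∈ K : |x − q| ≤ r}, where q, r ∈ ℚ with r > 0 (viewed in K via the canonical embedding ℚ → K), has nonempty intersection — if and only if the residue field of the natural valuation of K is ℝ, i.e., for every real number a there exists x ∈ K such that for all q ∈ ℚ: if q < a then (q : K) < x, and if a < q then x < (q : K). -/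
theorem stmt_19 {K : Type*} [Field K] [LinearOrder K] [IsStrictOrderedRing K] :
    (∀ 𝓝 : Set (Set K), 𝓝.Nonempty →
      (∀ C ∈ 𝓝, ∃ q r : ℚ, 0 < r ∧ C = {x : K | |x - (q : K)| ≤ (r : K)}) →
      IsChain (· ⊆ ·) 𝓝 → (⋂₀ 𝓝).Nonempty) ↔
    (∀ a : ℝ, ∃ x : K, ∀ q : ℚ,
      ((q : ℝ) < a → (q : K) < x) ∧ (a < (q : ℝ) → x < (q : K))) := by
  constructor
  · intro H a
    -- choose rational sequences approaching a from below and above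
    have hstep : ∀ n : ℕ, (1:ℝ)/(n+2) < 1/(n+1) := by
      intro n
      apply one_div_lt_one_div_of_lt
      · positivity
      · linarith
    have hleb : ∀ n : ℕ, ∃ p : ℚ, (a - 1/(n+1) : ℝ) < p ∧ (p:ℝ) < a - 1/(n+2) := by
      intro n
      exact exists_rat_btwn (by linarith [hstep n])
    have hueb : ∀ n : ℕ, ∃ p : ℚ, (a + 1/(n+2) : ℝ) < p ∧ (p:ℝ) < a + 1/(n+1) := by
      intro n
      exact exists_rat_btwn (by linarith [hstep n])
    choose l hl1 hl2 using hleb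
    choose u hu1 hu2 using hueb
    have hpos : ∀ n : ℕ, (0:ℝ) < 1/((n:ℝ)+2) := by intro n; positivity
    have hla : ∀ n : ℕ, (l n : ℝ) < a := fun n => by linarith [hl2 n, hpos n]
    have hau : ∀ n : ℕ, a < (u n : ℝ) := fun n => by linarith [hu1 n, hpos n]
    have hlu : ∀ n : ℕ, l n < u n := by
      intro n
      exact_mod_cast (hla n).trans (hau n)
    -- monotonicity
    have hlmono : ∀ m n : ℕ, m ≤ n → l m ≤ l n := by
      intro m n hmn
      rcases eq_or_lt_of_le hmn with rfl | h
      · exact le_refl _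
      · have h1 : (1:ℝ)/(n+1) ≤ 1/(m+2) := by
          apply one_div_le_one_div_of_le
          · positivity
          · have : (m:ℝ) + 1 ≤ n := by exact_mod_cast h
            linarith
        have : (l m : ℝ) < (l n : ℝ) := by linarith [hl2 m, hl1 n]
        exact_mod_cast this.le
    have humono : ∀ m n : ℕ, m ≤ n → u n ≤ u m := by
      intro m n hmn
      rcases eq_or_lt_of_le hmn with rfl | h
      · exact le_refl _
      · have h1 : (1:ℝ)/(n+1) ≤ 1/(m+2) := by
          apply one_div_le_one_div_of_le
          · positivity
          · have : (m:ℝ) + 1 ≤ n := by exact_mod_cast h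
            linarith
        have : (u n : ℝ) < (u m : ℝ) := by linarith [hu2 n, hu1 m]
        exact_mod_cast this.le
    set ball : ℕ → Set K :=
      fun n => {x : K | |x - (((l n + u n)/2 : ℚ) : K)| ≤ (((u n - l n)/2 : ℚ) : K)} with hballdef
    have hball : ∀ (n : ℕ) (x : K), x ∈ ball n ↔ ((l n : K) ≤ x ∧ x ≤ (u n : K)) := by
      intro n x
      simp only [hballdef, Set.mem_setOf_eq, abs_le]
      push_cast
      constructor <;> intro h <;> exact ⟨by linarith [h.1, h.2], by linarith [h.1, h.2]⟩
    have hsub : ∀ m n : ℕ, m ≤ n → ball n ⊆ ball m := by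
      intro m n hmn x hx
      rw [hball] at hx ⊢
      have h1 : (l m : K) ≤ (l n : K) := by exact_mod_cast hlmono m n hmn
      have h2 : (u n : K) ≤ (u m : K) := by exact_mod_cast humono m n hmn
      exact ⟨h1.trans hx.1, hx.2.trans h2⟩
    obtain ⟨x, hx⟩ := H (Set.range ball) ⟨ball 0, ⟨0, rfl⟩⟩
      (by
        rintro C ⟨n, rfl⟩
        refine ⟨(l n + u n)/2, (u n - l n)/2, by linarith [hlu n], rfl⟩)
      (by
        rintro C ⟨m, rfl⟩ C' ⟨n, rfl⟩ _
        rcases le_total m n with h | h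
        · exact Or.inr (hsub m n h)
        · exact Or.inl (hsub n m h))
    refine ⟨x, fun q => ⟨?_, ?_⟩⟩
    · intro hq
      obtain ⟨n, hn⟩ := exists_nat_one_div_lt (show (0:ℝ) < a - q by linarith)
      have hmem := (hball n x).mp (hx (ball n) ⟨n, rfl⟩)
      have : (q : ℝ) < l n := by linarith [hl1 n, hn]
      have hqk : (q : K) < (l n : K) := by exact_mod_cast this
      exact hqk.trans_le hmem.1
    · intro hq
      obtain ⟨n, hn⟩ := exists_nat_one_div_lt (show (0:ℝ) < (q:ℝ) - a by linarith)
      have hmem := (hball n x).mp (hx (ball n) ⟨n, rfl⟩)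
      have : (u n : ℝ) < q := by linarith [hu2 n, hn]
      have hqk : (u n : K) < (q : K) := by exact_mod_cast this
      exact hmem.2.trans_lt hqk
  · intro H 𝓝 hne hform hchain
    choose! q r hr hC using hform
    have hmem : ∀ C ∈ 𝓝, ∀ x : K, x ∈ C ↔ ((q C : K) - r C ≤ x ∧ x ≤ (q C : K) + r C) := by
      intro C hCm x
      conv_lhs => rw [hC C hCm]
      simp only [Set.mem_setOf_eq, abs_le]
      constructor <;> intro h <;> exact ⟨by linarith [h.1, h.2], by linarith [h.1, h.2]⟩
    have key : ∀ C ∈ 𝓝, ∀ C' ∈ 𝓝, q C - r C ≤ q C' + r C' := by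
      intro C hCm C' hCm'
      by_cases hEq : C = C'
      · subst hEq; linarith [hr C hCm]
      rcases hchain hCm hCm' hEq with h | h
      · have hrK : (0:K) < r C := by exact_mod_cast hr C hCm
        have hx : ((q C : K) - r C) ∈ C := by
          rw [hmem C hCm]; exact ⟨le_refl _, by linarith⟩
        have h1 := ((hmem C' hCm' _).mp (h hx)).2
        have h2 : ((q C - r C : ℚ) : K) ≤ ((q C' + r C' : ℚ) : K) := by push_cast; linarith
        exact_mod_cast h2
      · have hrK : (0:K) < r C' := by exact_mod_cast hr C' hCm'
        have hx : ((q C' : K) + r C') ∈ C' := by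
          rw [hmem C' hCm']; exact ⟨by linarith, le_refl _⟩
        have h1 := ((hmem C hCm _).mp (h hx)).1
        have h2 : ((q C - r C : ℚ) : K) ≤ ((q C' + r C' : ℚ) : K) := by push_cast; linarith
        exact_mod_cast h2
    obtain ⟨C₀, hC₀⟩ := hne
    set S : Set ℝ := {y | ∃ C ∈ 𝓝, y = (q C : ℝ) - r C} with hSdef
    have hSne : S.Nonempty := ⟨_, C₀, hC₀, rfl⟩
    have hSbdd : BddAbove S := by
      refine ⟨(q C₀ : ℝ) + r C₀, ?_⟩
      rintro y ⟨C, hCm, rfl⟩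
      exact_mod_cast key C hCm C₀ hC₀
    set L := sSup S with hLdef
    have hLleft : ∀ C ∈ 𝓝, (q C : ℝ) - r C ≤ L := fun C hCm => le_csSup hSbdd ⟨C, hCm, rfl⟩
    have hLright : ∀ C ∈ 𝓝, L ≤ (q C : ℝ) + r C := by
      intro C hCm
      apply csSup_le hSne
      rintro y ⟨C', hCm', rfl⟩
      exact_mod_cast key C' hCm' C hCm
    by_cases hrat : ∃ p : ℚ, (p : ℝ) = L
    · obtain ⟨p, hp⟩ := hrat
      refine ⟨(p : K), ?_⟩
      rw [Set.mem_sInter]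
      intro C hCm
      rw [hmem C hCm]
      have h1 : q C - r C ≤ p := by
        have := hLleft C hCm; rw [← hp] at this; exact_mod_cast this
      have h2 : (p : ℚ) ≤ q C + r C := by
        have := hLright C hCm; rw [← hp] at this; exact_mod_cast this
      constructor
      · have : ((q C - r C : ℚ) : K) ≤ (p : K) := by exact_mod_cast h1
        push_cast at this; linarith
      · have : ((p : ℚ) : K) ≤ ((q C + r C : ℚ) : K) := by exact_mod_cast h2
        push_cast at this; linarith
    · obtain ⟨x, hx⟩ := H L
      refine ⟨x, ?_⟩
      rw [Set.mem_sInter]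
      intro C hCm
      rw [hmem C hCm]
      have hlt1 : ((q C - r C : ℚ) : ℝ) < L := by
        refine lt_of_le_of_ne ?_ (fun h => hrat ⟨_, h⟩)
        push_cast
        exact hLleft C hCm
      have hlt2 : L < ((q C + r C : ℚ) : ℝ) := by
        refine lt_of_le_of_ne ?_ (fun h => hrat ⟨_, h.symm⟩)
        push_cast
        exact hLright C hCm
      have hk1 := (hx (q C - r C)).1 hlt1
      have hk2 := (hx (q C + r C)).2 hlt2
      push_cast at hk1 hk2
      exact ⟨hk1.le, hk2.le⟩
end
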